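/- arXiv:2206.10438 — 4 statements merged into one kernel-verified Lean document; each statement's English description precedes it below -/
import Mathlib

section
/- Let σ ≥ 0 and let Σ : [0,T] → End(ℝⁿ) be continuous with ‖Σ(t)‖ ≤ σ for all t, and let ξ : [0,T] → ℝⁿ be continuous with |ξ(t)| ≤ Σᵢ κᵢ e^{λᵢ t} for finitely many constants κᵢ ≥ 0 and λᵢ > σ. If χ : [0,T] → ℝⁿ is a C¹ solution of χ'(t) = Σ(t)χ(t) + ξ(t), then for all t ∈ [0,T]: |χ(t)| ≤ |χ(0)| e^{σ t} + Σᵢ (λᵢ − σ)⁻¹ κᵢ e^{λᵢ t}. -/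
open Real Set

/-!
The right-hand side `B(t) = |χ(0)| e^{σt} + ∑ᵢ (λᵢ - σ)⁻¹ κᵢ e^{λᵢ t}` solves the scalar comparison
equation `B' = σ B + ∑ᵢ κᵢ e^{λᵢ t}` exactly, while `|χ'| ≤ σ |χ| + ∑ᵢ κᵢ e^{λᵢ t}` and
`|χ(0)| ≤ B(0)`. A fencing argument for supersolutions of this linear differential
inequality gives `|χ| ≤ B` on `[0, T]`.
-/

theorem hasDerivAt_const_mul_exp_mul (a μ t : ℝ) :
    HasDerivAt (fun t => a * exp (μ * t)) (μ * (a * exp (μ * t))) t :=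
  (((hasDerivAt_id' t).const_mul μ).exp.const_mul a).congr_deriv (by ring)

theorem image_norm_le_of_norm_deriv_right_le_mul_add {E : Type*} [NormedAddCommGroup E]
    [NormedSpace ℝ E] {f f' : ℝ → E} {B g : ℝ → ℝ} {a b σ : ℝ} (hf : ContinuousOn f (Icc a b))
    (hf' : ∀ x ∈ Ico a b, HasDerivWithinAt f (f' x) (Ici x) x)
    (bound : ∀ x ∈ Ico a b, ‖f' x‖ ≤ σ * ‖f x‖ + g x)
    (hB : ∀ x, HasDerivAt B (σ * B x + g x) x) (ha : ‖f a‖ ≤ B a) :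
    ∀ ⦃x⦄, x ∈ Icc a b → ‖f x‖ ≤ B x := by
  -- Perturbing `B` by `ε e^{(σ+1)x}` makes the fence strict; then let `ε → 0`.
  have perturbed : ∀ ε > 0, ∀ ⦃x⦄, x ∈ Icc a b → ‖f x‖ ≤ B x + ε * exp ((σ + 1) * x) := by
    intro ε hε
    refine image_norm_le_of_norm_deriv_right_lt_deriv_boundary hf hf' ?_
      (fun x => (hB x).add (hasDerivAt_const_mul_exp_mul ε (σ + 1) x)) fun x hx hfx => ?_
    · linarith [mul_pos hε (exp_pos ((σ + 1) * a))]
    · have := mul_pos hε (exp_pos ((σ + 1) * x))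
      calc ‖f' x‖ ≤ σ * ‖f x‖ + g x := bound x hx
        _ < _ := by rw [hfx]; linarith
  intro x hx
  refine le_of_forall_pos_le_add fun η hη => ?_
  have hpos := exp_pos ((σ + 1) * x)
  simpa [div_mul_cancel₀ η hpos.ne'] using perturbed (η / exp ((σ + 1) * x)) (by positivity) hx

theorem hasDerivAt_exp_add_sum_exp {ι : Type*} [Fintype ι] (c σ : ℝ) (κ lam : ι → ℝ)
    (hlam : ∀ i, lam i ≠ σ) (t : ℝ) :
    HasDerivAt (fun t => c * exp (σ * t) + ∑ i, (lam i - σ)⁻¹ * κ i * exp (lam i * t))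
      (σ * (c * exp (σ * t) + ∑ i, (lam i - σ)⁻¹ * κ i * exp (lam i * t))
        + ∑ i, κ i * exp (lam i * t)) t := by
  refine ((hasDerivAt_const_mul_exp_mul c σ t).add (HasDerivAt.fun_sum fun i _ =>
    hasDerivAt_const_mul_exp_mul ((lam i - σ)⁻¹ * κ i) (lam i) t)).congr_deriv ?_
  rw [mul_add, Finset.mul_sum, add_assoc, ← Finset.sum_add_distrib]
  refine congrArg _ (Finset.sum_congr rfl fun i _ => ?_)
  have := sub_ne_zero.2 (hlam i)
  field_simp
  ring

theorem stmt_0_general {n : ℕ} {ι : Type} [Fintype ι] (T σ : ℝ)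
    (κ lam : ι → ℝ) (hκ : ∀ i, 0 ≤ κ i) (hlam : ∀ i, σ < lam i)
    (S : ℝ → (EuclideanSpace ℝ (Fin n) →L[ℝ] EuclideanSpace ℝ (Fin n)))
    (ξ χ : ℝ → EuclideanSpace ℝ (Fin n))
    (hSle : ∀ t ∈ Icc (0 : ℝ) T, ‖S t‖ ≤ σ)
    (hξle : ∀ t ∈ Icc (0 : ℝ) T, ‖ξ t‖ ≤ ∑ i, κ i * exp (lam i * t))
    (hode : ∀ t ∈ Icc (0 : ℝ) T, HasDerivAt χ (S t (χ t) + ξ t) t) :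
    ∀ t ∈ Icc (0 : ℝ) T,
      ‖χ t‖ ≤ ‖χ 0‖ * exp (σ * t) + ∑ i, (lam i - σ)⁻¹ * κ i * exp (lam i * t) := by
  intro t ht
  have hinit : 0 ≤ ∑ i, (lam i - σ)⁻¹ * κ i :=
    Finset.sum_nonneg fun i _ => mul_nonneg (inv_nonneg.2 (sub_pos.2 (hlam i)).le) (hκ i)
  refine image_norm_le_of_norm_deriv_right_le_mul_add
    (fun x hx => (hode x hx).continuousAt.continuousWithinAt)
    (fun x hx => (hode x (Ico_subset_Icc_self hx)).hasDerivWithinAt)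
    (fun x hx => ?_) (hasDerivAt_exp_add_sum_exp _ σ κ lam fun i => (hlam i).ne') ?_ ht
  · have hx := Ico_subset_Icc_self hx
    exact (norm_add_le _ _).trans
      (add_le_add ((S x).le_of_opNorm_le (hSle x hx) _) (hξle x hx))
  · simpa using hinit

/-- A Gronwall-type bound for the linear ODE system `χ' = Σ(t) χ + ξ(t)` on
`[0,T]`, where `‖Σ(t)‖ ≤ σ` and the inhomogeneity is bounded by a finite sum of exponentials
`∑ᵢ κᵢ e^{λᵢ t}` with rates `λᵢ > σ`. -/
theorem stmt_0 {n : ℕ} {ι : Type} [Fintype ι] (T σ : ℝ) (hσ : 0 ≤ σ) (hT : 0 ≤ T)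
    (κ lam : ι → ℝ) (hκ : ∀ i, 0 ≤ κ i) (hlam : ∀ i, σ < lam i)
    (S : ℝ → (EuclideanSpace ℝ (Fin n) →L[ℝ] EuclideanSpace ℝ (Fin n)))
    (ξ χ : ℝ → EuclideanSpace ℝ (Fin n))
    (hScont : ContinuousOn S (Icc 0 T))
    (hSle : ∀ t ∈ Icc (0 : ℝ) T, ‖S t‖ ≤ σ)
    (hξcont : ContinuousOn ξ (Icc 0 T))
    (hξle : ∀ t ∈ Icc (0 : ℝ) T, ‖ξ t‖ ≤ ∑ i, κ i * exp (lam i * t))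
    (hode : ∀ t ∈ Icc (0 : ℝ) T, HasDerivAt χ (S t (χ t) + ξ t) t) :
    ∀ t ∈ Icc (0 : ℝ) T,
      ‖χ t‖ ≤ ‖χ 0‖ * exp (σ * t) + ∑ i, (lam i - σ)⁻¹ * κ i * exp (lam i * t) :=
  stmt_0_general T σ κ lam hκ hlam S ξ χ hSle hξle hode
end

section
/- Let Q(X) = (X−λ₁)(X−λ₂) with distinct real roots λ₁ ≠ λ₂, let a ∈ ℝ, and let ψ : [0,∞) → [0,∞) be integrable. If y : [0,∞) → ℝ is a C² solution of y'' − (λ₁+λ₂) y' + λ₁λ₂ y = u, where |u(r)| ≤ e^{a r} ψ(r) for all r, then there exist A₁, A₂ ∈ ℝ and a constant C = C(λ₁, λ₂, a) such that |y(r) − A₁ e^{λ₁ r} − A₂ e^{λ₂ r}| ≤ C ‖ψ‖_{L¹([0,∞))} e^{a r} for all r ≥ 0. -/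
/-!
Since `Q(X) = (X - λ₁)(X - λ₂)` factors in either order, both `z₁ = y' - λ₂ y` and
`z₂ = y' - λ₁ y` solve first-order equations `z' - λ z = u` (with `λ = λ₁`, resp. `λ₂`), and
`y = (z₁ - z₂) / (λ₁ - λ₂)`. Variation of constants gives
`z(r) = e^{λr} (z(0) + c) + e^{λr} (∫₀^r e^{-λs} u(s) ds - c)` for every `c`; taking `c = 0` if
`a ≥ λ` and `c = ∫₀^∞ e^{-λs} u(s) ds` if `a < λ`, the last term is at most `e^{ar} ‖ψ‖₁`.
-/

open Real Set MeasureTheory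

lemma norm_setIntegral_le_mul_setIntegral {α E : Type*} [MeasurableSpace α]
    [NormedAddCommGroup E] [NormedSpace ℝ E] {μ : Measure α} {g : α → E} {ψ : α → ℝ}
    {T U : Set α} {K : ℝ} (hψ : IntegrableOn ψ U μ) (hψ0 : ∀ s ∈ U, 0 ≤ ψ s)
    (hU : MeasurableSet U) (hT : MeasurableSet T) (hTU : T ⊆ U) (hK : 0 ≤ K)
    (hg : ∀ s ∈ T, ‖g s‖ ≤ K * ψ s) :
    ‖∫ s in T, g s ∂μ‖ ≤ K * ∫ s in U, ψ s ∂μ :=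
  calc ‖∫ s in T, g s ∂μ‖ ≤ ∫ s in T, K * ψ s ∂μ :=
        norm_integral_le_of_norm_le ((hψ.mono_set hTU).const_mul K)
          (ae_restrict_of_forall_mem hT hg)
    _ = K * ∫ s in T, ψ s ∂μ := integral_const_mul K ψ
    _ ≤ K * ∫ s in U, ψ s ∂μ := mul_le_mul_of_nonneg_left
        (setIntegral_mono_set hψ (ae_restrict_of_forall_mem hU hψ0) hTU.eventuallyLE) hK

lemma exists_abs_intervalIntegral_sub_le {g ψ : ℝ → ℝ} {b : ℝ}
    (hψ : IntegrableOn ψ (Ici 0)) (hψ0 : ∀ s ∈ Ici (0 : ℝ), 0 ≤ ψ s)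
    (hgm : AEStronglyMeasurable g (volume.restrict (Ioi 0)))
    (hg : ∀ s ∈ Ici (0 : ℝ), |g s| ≤ exp (b * s) * ψ s) :
    ∃ c : ℝ, ∀ r ∈ Ici (0 : ℝ),
      |(∫ s in (0 : ℝ)..r, g s) - c| ≤ exp (b * r) * ∫ s in Ici (0 : ℝ), ψ s := by
  rcases le_or_gt 0 b with hb | hb
  · refine ⟨0, fun r hr => ?_⟩
    rw [sub_zero, intervalIntegral.integral_of_le hr, ← Real.norm_eq_abs]
    refine norm_setIntegral_le_mul_setIntegral hψ hψ0 measurableSet_Ici measurableSet_Ioc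
      (fun s hs => mem_Ici.2 hs.1.le) (exp_pos _).le fun s hs => ?_
    calc ‖g s‖ ≤ exp (b * s) * ψ s := hg s (mem_Ici.2 hs.1.le)
      _ ≤ exp (b * r) * ψ s := mul_le_mul_of_nonneg_right
          (exp_le_exp.2 (mul_le_mul_of_nonneg_left hs.2 hb)) (hψ0 s (mem_Ici.2 hs.1.le))
  · have hgi : IntegrableOn g (Ioi 0) := by
      refine Integrable.mono' (hψ.mono_set Ioi_subset_Ici_self) hgm
        (ae_restrict_of_forall_mem measurableSet_Ioi fun s hs => ?_)
      calc ‖g s‖ ≤ exp (b * s) * ψ s := hg s (mem_Ici.2 (le_of_lt hs))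
        _ ≤ ψ s := mul_le_of_le_one_left (hψ0 s (mem_Ici.2 (le_of_lt hs)))
            (exp_le_one_iff.2 (mul_nonpos_of_nonpos_of_nonneg hb.le (le_of_lt hs)))
    refine ⟨∫ s in Ioi 0, g s, fun r hr => ?_⟩
    rw [← intervalIntegral.integral_interval_add_Ioi hgi (hgi.mono_set (Ioi_subset_Ioi hr)),
      sub_add_cancel_left, abs_neg, ← Real.norm_eq_abs]
    refine norm_setIntegral_le_mul_setIntegral hψ hψ0 measurableSet_Ici measurableSet_Ioi
      (fun s hs => mem_Ici.2 (hr.trans (le_of_lt hs))) (exp_pos _).le fun s hs => ?_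
    calc ‖g s‖ ≤ exp (b * s) * ψ s := hg s (mem_Ici.2 (hr.trans (le_of_lt hs)))
      _ ≤ exp (b * r) * ψ s := mul_le_mul_of_nonneg_right
          (exp_le_exp.2 (mul_le_mul_of_nonpos_left (le_of_lt hs) hb.le))
          (hψ0 s (mem_Ici.2 (hr.trans (le_of_lt hs))))

lemma eq_exp_mul_of_hasDerivWithinAt_sub_mul {l : ℝ} {v v' f : ℝ → ℝ}
    (hv : ∀ r ∈ Ici (0 : ℝ), HasDerivWithinAt v (v' r) (Ici 0) r)
    (hf : ContinuousOn f (Ici 0)) (heq : ∀ r ∈ Ici (0 : ℝ), v' r - l * v r = f r) :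
    ∀ r ∈ Ici (0 : ℝ), v r = exp (l * r) * (v 0 + ∫ s in (0 : ℝ)..r, exp (-(l * s)) * f s) := by
  intro r hr
  have hexp : Continuous fun s : ℝ => exp (-(l * s)) := by fun_prop
  have hFTC : (∫ s in (0 : ℝ)..r, exp (-(l * s)) * f s)
      = exp (-(l * r)) * v r - exp (-(l * 0)) * v 0 := by
    refine intervalIntegral.integral_eq_sub_of_hasDeriv_right_of_le hr
      ((hexp.continuousOn.mul fun x hx => (hv x hx).continuousWithinAt).mono Icc_subset_Ici_self)
      (fun x hx => ?_)
      ((hexp.continuousOn.mul hf).mono (by rw [uIcc_of_le hr]; exact Icc_subset_Ici_self)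
        |>.intervalIntegrable)
    have hx0 : x ∈ Ici (0 : ℝ) := le_of_lt hx.1
    have hexp' : HasDerivAt (fun s => exp (-(l * s))) (exp (-(l * x)) * -(l * 1)) x :=
      ((hasDerivAt_id x).const_mul l).neg.exp
    convert (hexp'.hasDerivWithinAt.mul (hv x hx0)).mono (Ioi_subset_Ici hx.1.le) using 1
    linear_combination (-exp (-(l * x))) * heq x hx0
  rw [hFTC, mul_zero, neg_zero, exp_zero, one_mul, add_sub_cancel, ← mul_assoc, ← exp_add,
    add_neg_cancel, exp_zero, one_mul]

lemma exists_abs_sub_mul_exp_le_of_hasDerivWithinAt {l a : ℝ} {ψ v v' f : ℝ → ℝ}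
    (hψ : IntegrableOn ψ (Ici 0)) (hψ0 : ∀ s ∈ Ici (0 : ℝ), 0 ≤ ψ s)
    (hv : ∀ r ∈ Ici (0 : ℝ), HasDerivWithinAt v (v' r) (Ici 0) r)
    (hf : ContinuousOn f (Ici 0)) (heq : ∀ r ∈ Ici (0 : ℝ), v' r - l * v r = f r)
    (hfψ : ∀ r ∈ Ici (0 : ℝ), |f r| ≤ exp (a * r) * ψ r) :
    ∃ B : ℝ, ∀ r ∈ Ici (0 : ℝ),
      |v r - B * exp (l * r)| ≤ exp (a * r) * ∫ s in Ici (0 : ℝ), ψ s := by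
  have hgm : AEStronglyMeasurable (fun s => exp (-(l * s)) * f s) (volume.restrict (Ioi 0)) :=
    ((by fun_prop : Continuous fun s : ℝ => exp (-(l * s))).continuousOn.mul
      hf).aestronglyMeasurable measurableSet_Ici |>.mono_measure
      (Measure.restrict_mono Ioi_subset_Ici_self le_rfl)
  have hg : ∀ s ∈ Ici (0 : ℝ), |exp (-(l * s)) * f s| ≤ exp ((a - l) * s) * ψ s := by
    intro s hs
    calc |exp (-(l * s)) * f s| = exp (-(l * s)) * |f s| := by
          rw [abs_mul, abs_of_pos (exp_pos _)]
      _ ≤ exp (-(l * s)) * (exp (a * s) * ψ s) := by gcongr; exact hfψ s hs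
      _ = exp ((a - l) * s) * ψ s := by rw [← mul_assoc, ← exp_add]; ring_nf
  obtain ⟨c, hc⟩ := exists_abs_intervalIntegral_sub_le hψ hψ0 hgm hg
  refine ⟨v 0 + c, fun r hr => ?_⟩
  calc |v r - (v 0 + c) * exp (l * r)|
      = exp (l * r) * |(∫ s in (0 : ℝ)..r, exp (-(l * s)) * f s) - c| := by
        rw [eq_exp_mul_of_hasDerivWithinAt_sub_mul hv hf heq r hr, ← abs_of_pos (exp_pos (l * r)),
          ← abs_mul, abs_of_pos (exp_pos (l * r))]
        ring_nf
    _ ≤ exp (l * r) * (exp ((a - l) * r) * ∫ s in Ici (0 : ℝ), ψ s) := by gcongr; exact hc r hr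
    _ = exp (a * r) * ∫ s in Ici (0 : ℝ), ψ s := by rw [← mul_assoc, ← exp_add]; ring_nf

/-- Let `Q(X) = (X - λ₁)(X - λ₂)` with distinct real roots, `a ∈ ℝ`, and let
`ψ : [0,∞) → [0,∞)` be integrable. If `y` is a `C²` solution of `Q(d/dr) y = u` on `[0,∞)` with
`|u(r)| ≤ e^{a r} ψ(r)`, then there are `A₁, A₂` and a constant `C = C(λ₁, λ₂, a)` (independent
of `ψ, u, y`) with `|y(r) - A₁ e^{λ₁ r} - A₂ e^{λ₂ r}| ≤ C ‖ψ‖_{L¹} e^{a r}` for all `r ≥ 0`. -/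
theorem stmt_3 (l₁ l₂ a : ℝ) (hne : l₁ ≠ l₂) :
    ∃ C : ℝ, 0 < C ∧
      ∀ ψ u y y' y'' : ℝ → ℝ,
        (∀ r, 0 ≤ ψ r) →
        IntegrableOn ψ (Ici 0) →
        (∀ r ∈ Ici (0 : ℝ), HasDerivWithinAt y (y' r) (Ici 0) r) →
        (∀ r ∈ Ici (0 : ℝ), HasDerivWithinAt y' (y'' r) (Ici 0) r) →
        ContinuousOn y'' (Ici 0) →
        (∀ r ∈ Ici (0 : ℝ), y'' r - (l₁ + l₂) * y' r + l₁ * l₂ * y r = u r) →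
        (∀ r ∈ Ici (0 : ℝ), |u r| ≤ exp (a * r) * ψ r) →
        ∃ A₁ A₂ : ℝ, ∀ r ∈ Ici (0 : ℝ),
          |y r - A₁ * exp (l₁ * r) - A₂ * exp (l₂ * r)|
            ≤ C * (∫ s in Ici (0 : ℝ), ψ s) * exp (a * r) := by
  have hd : 0 < |l₁ - l₂| := abs_pos.2 (sub_ne_zero.2 hne)
  refine ⟨2 / |l₁ - l₂|, by positivity, ?_⟩
  intro ψ u y y' y'' hψ0 hψ hy hy' hy''c hODE hu
  have hψ0' : ∀ s ∈ Ici (0 : ℝ), 0 ≤ ψ s := fun s _ => hψ0 s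
  have hyc : ContinuousOn y (Ici 0) := fun x hx => (hy x hx).continuousWithinAt
  have hy'c : ContinuousOn y' (Ici 0) := fun x hx => (hy' x hx).continuousWithinAt
  have huc : ContinuousOn u (Ici 0) :=
    ((hy''c.sub (hy'c.const_smul (l₁ + l₂))).add (hyc.const_smul (l₁ * l₂))).congr
      fun x hx => (hODE x hx).symm
  obtain ⟨B₁, hB₁⟩ := exists_abs_sub_mul_exp_le_of_hasDerivWithinAt (l := l₁)
    (v := fun r => y' r - l₂ * y r) hψ hψ0'
    (fun r hr => (hy' r hr).sub ((hy r hr).const_mul l₂)) huc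
    (fun r hr => by rw [← hODE r hr]; ring) hu
  obtain ⟨B₂, hB₂⟩ := exists_abs_sub_mul_exp_le_of_hasDerivWithinAt (l := l₂)
    (v := fun r => y' r - l₁ * y r) hψ hψ0'
    (fun r hr => (hy' r hr).sub ((hy r hr).const_mul l₁)) huc
    (fun r hr => by rw [← hODE r hr]; ring) hu
  refine ⟨B₁ / (l₁ - l₂), -B₂ / (l₁ - l₂), fun r hr => ?_⟩
  have hsplit : y r - B₁ / (l₁ - l₂) * exp (l₁ * r) - -B₂ / (l₁ - l₂) * exp (l₂ * r)
      = ((y' r - l₂ * y r - B₁ * exp (l₁ * r)) - (y' r - l₁ * y r - B₂ * exp (l₂ * r)))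
        / (l₁ - l₂) := by
    field_simp [sub_ne_zero.2 hne]
    ring
  rw [hsplit, abs_div, div_le_iff₀ hd]
  calc _ ≤ |y' r - l₂ * y r - B₁ * exp (l₁ * r)| + |y' r - l₁ * y r - B₂ * exp (l₂ * r)| :=
        abs_sub _ _
    _ ≤ exp (a * r) * (∫ s in Ici (0 : ℝ), ψ s) + exp (a * r) * ∫ s in Ici (0 : ℝ), ψ s :=
        add_le_add (hB₁ r hr) (hB₂ r hr)
    _ = 2 / |l₁ - l₂| * (∫ s in Ici (0 : ℝ), ψ s) * exp (a * r) * |l₁ - l₂| := by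
        field_simp
        ring
end

section
/- Let Q(X) = (X−λ₁)(X−λ₂) with real roots λ₂ ≤ 0 < λ₁, let R ≥ 2, and let 𝒲(r) = Σₖ βₖ e^{μₖ r} on [0, R−1] with βₖ ≥ 0, μₖ ∉ {λ₁, λ₂}, and suppose 𝒲(r) ≤ K for all r ∈ [R−2, R−1]. Let ψ ∈ L¹([0,R−1]) with ‖ψ‖_{L¹} ≤ K, let a ≥ 0, and let y : [0,R−1] → ℝ be C² with |y| ≤ 1 and |y''(r) − (λ₁+λ₂) y'(r) + λ₁λ₂ y(r)| ≤ K(𝒲(r) + ψ(r) e^{−a r}) for all r. Then there is a constant C depending only on λ₁, λ₂, a, K, the μₖ and the number of summands (but not on R, the βₖ, ψ, or y) such that |y(r)| ≤ C ( e^{λ₂ r}(|y(0)| + 𝒲(0) + ‖ψ‖_{L¹}) + e^{λ₁ (r−R)} + 𝒲(r) + ‖ψ‖_{L¹} e^{−a r} ) for all r ∈ [0, R−1]. -/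
/-!
Put `u = y' - λ₂ y`, so that `u' - λ₁ u = Q(d/dr) y`. The mean value theorem on `[R-2, R-1]`
gives a point `s₀` there with `|y'(s₀)| ≤ 2`, hence `|u(s₀)| ≤ 2 + |λ₂|`, and `𝒲(s₀) ≤ K`.
Integrating `u' - λ₁ u` against `e^{λ₁(t-s)}` between `s₀` and `t` bounds `|u(t)|` by multiples of
`e^{λ₁(t-R)}`, `𝒲(t)` and the tail `∫_t^{R-1} e^{λ₁(t-s)} ψ(s) e^{-as} ds`: since `μₖ ≠ λ₁`, each
`e^{μₖ s}` integrates against `e^{λ₁(t-s)}` to at most the sum of its endpoint values divided by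
`|μₖ - λ₁|`. Integrating `y' - λ₂ y = u` from `0` against `e^{λ₂(r-x)}` in the same way gives the
claim; for the tail term, Tonelli reduces it to
`∫_0^{min(r,s)} e^{λ₂(r-x) + λ₁(x-s) - as} dx ≤ 2 (e^{λ₂ r} + e^{-ar}) / (λ₁ - λ₂)`.
-/

open Real Set MeasureTheory
open scoped Interval

theorem integral_exp_mul_exp_le (l m t x z : ℝ) (hlm : m ≠ l) :
    ∫ s in Ι x z, exp (l * (t - s)) * exp (m * s) ≤
      (exp (l * (t - x)) * exp (m * x) + exp (l * (t - z)) * exp (m * z)) / |m - l| := by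
  set e : ℝ → ℝ := fun s => exp (l * (t - s)) * exp (m * s)
  have he : ∀ s, HasDerivAt (fun s => e s / (m - l)) (e s) s := by
    intro s
    have := ((((hasDerivAt_id s).const_sub t).const_mul l).exp.mul
      ((hasDerivAt_id s).const_mul m).exp).div_const (m - l)
    refine this.congr_deriv ?_
    simp only [e, id]
    field_simp [sub_ne_zero.2 hlm]
    ring
  have hftc : ∫ s in x..z, e s = (e z - e x) / (m - l) := by
    rw [intervalIntegral.integral_eq_sub_of_hasDerivAt (fun s _ => he s)
      ((by fun_prop : Continuous e).intervalIntegrable _ _), sub_div]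
  have hnonneg : 0 ≤ ∫ s in Ι x z, e s := setIntegral_nonneg measurableSet_uIoc
    fun s _ => by positivity
  calc ∫ s in Ι x z, e s = |∫ s in x..z, e s| := by
        rw [intervalIntegral.abs_integral_eq_abs_integral_uIoc, abs_of_nonneg hnonneg]
    _ = |e z - e x| / |m - l| := by rw [hftc, abs_div]
    _ ≤ (e x + e z) / |m - l| := by
        gcongr
        rw [abs_sub_comm]
        refine (abs_sub _ _).trans_eq ?_
        simp only [e, abs_of_pos (exp_pos _), abs_mul]

theorem integral_exp_mul_exp_sub_le {l₁ l₂ r : ℝ} (hl : l₂ < l₁) (hr : 0 ≤ r) (c : ℝ) :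
    ∫ x in Ι 0 r, exp (l₂ * (r - x)) * exp (l₁ * (x - c)) ≤
      2 / (l₁ - l₂) * exp (l₁ * (r - c)) := by
  have hshift : ∀ x, exp (l₂ * (r - x)) * exp (l₁ * (x - c)) =
      exp (-(l₁ * c)) * (exp (l₂ * (r - x)) * exp (l₁ * x)) := fun x => by
    simp only [← exp_add]; ring_nf
  have hrr : exp (l₂ * r) ≤ exp (l₁ * r) := by gcongr
  simp_rw [hshift]
  rw [integral_const_mul]
  calc _ ≤ exp (-(l₁ * c)) * ((exp (l₂ * (r - 0)) * exp (l₁ * 0) +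
        exp (l₂ * (r - r)) * exp (l₁ * r)) / |l₁ - l₂|) :=
        mul_le_mul_of_nonneg_left (integral_exp_mul_exp_le _ _ _ _ _ hl.ne') (exp_pos _).le
    _ ≤ exp (-(l₁ * c)) * (2 * exp (l₁ * r) / (l₁ - l₂)) := by
        rw [abs_of_pos (sub_pos.2 hl)]
        simp only [sub_zero, sub_self, mul_zero, exp_zero, mul_one, one_mul]
        gcongr
        linarith
    _ = _ := by
        rw [show l₁ * (r - c) = -(l₁ * c) + l₁ * r by ring, exp_add]
        ring

theorem integral_exp_mul_exp_mul_exp_le {l₁ l₂ a r s m : ℝ} (hl : l₂ < l₁) (hl₁ : 0 ≤ l₁)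
    (ha : 0 ≤ a) (hm : 0 ≤ m) (hmr : m ≤ r) (hms : m ≤ s) :
    ∫ t in Icc 0 m, exp (l₂ * (r - t)) * (exp (l₁ * (t - s)) * exp (-(a * s))) ≤
      2 / (l₁ - l₂) * (exp (l₂ * r) + exp (-(a * r))) := by
  have hsplit : ∀ t, exp (l₂ * (r - t)) * (exp (l₁ * (t - s)) * exp (-(a * s))) =
      exp (-((l₁ + a) * s)) * (exp (l₂ * (r - t)) * exp (l₁ * t)) := fun t => by
    simp only [← exp_add]; ring_nf
  have hE : -((l₁ + a) * s) + (l₂ * (r - m) + l₁ * m) ≤ l₂ * r ∨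
      -((l₁ + a) * s) + (l₂ * (r - m) + l₁ * m) ≤ -(a * r) := by
    rcases le_total r s with hrs | hsr
    · right; nlinarith
    · rcases le_total 0 (l₂ + a) with h | h
      · left; nlinarith
      · right; nlinarith
  have hend : exp (-((l₁ + a) * s)) * (exp (l₂ * (r - m)) * exp (l₁ * m)) ≤
      exp (l₂ * r) + exp (-(a * r)) := by
    rw [← exp_add, ← exp_add]
    rcases hE with h | h
    · linarith [exp_le_exp.2 h, exp_pos (-(a * r))]
    · linarith [exp_le_exp.2 h, exp_pos (l₂ * r)]
  have hstart : exp (-((l₁ + a) * s)) * (exp (l₂ * (r - 0)) * exp (l₁ * 0)) ≤ exp (l₂ * r) := by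
    rw [sub_zero, mul_zero, exp_zero, mul_one]
    exact mul_le_of_le_one_left (exp_pos _).le (exp_le_one_iff.2 (by nlinarith))
  rw [integral_Icc_eq_integral_Ioc, ← uIoc_of_le hm]
  simp_rw [hsplit]
  rw [integral_const_mul]
  calc _ ≤ exp (-((l₁ + a) * s)) * ((exp (l₂ * (r - 0)) * exp (l₁ * 0) +
        exp (l₂ * (r - m)) * exp (l₁ * m)) / |l₁ - l₂|) :=
        mul_le_mul_of_nonneg_left (integral_exp_mul_exp_le _ _ _ _ _ hl.ne') (exp_pos _).le
    _ ≤ (2 * (exp (l₂ * r) + exp (-(a * r)))) / (l₁ - l₂) := by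
        rw [abs_of_pos (sub_pos.2 hl), mul_div_assoc', mul_add]
        gcongr
        linarith [exp_pos (-(a * r))]
    _ = _ := by ring

section expSum

variable {ι : Type*} [Fintype ι]

/-- The paper's `𝒲`. -/
noncomputable def expSum (β μ : ι → ℝ) (s : ℝ) : ℝ := ∑ k, β k * exp (μ k * s)

theorem expSum_nonneg {β : ι → ℝ} (hβ : ∀ k, 0 ≤ β k) (μ : ι → ℝ) (s : ℝ) :
    0 ≤ expSum β μ s :=
  Finset.sum_nonneg fun k _ => mul_nonneg (hβ k) (exp_pos _).le

@[fun_prop]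
theorem continuous_expSum (β μ : ι → ℝ) : Continuous (expSum β μ) := by
  unfold expSum; fun_prop

theorem integral_exp_mul_expSum_le {β μ : ι → ℝ} {l : ℝ} (hβ : ∀ k, 0 ≤ β k)
    (hμ : ∀ k, μ k ≠ l) (t x z : ℝ) :
    ∫ s in Ι x z, exp (l * (t - s)) * expSum β μ s ≤
      (∑ k, |μ k - l|⁻¹) *
        (exp (l * (t - x)) * expSum β μ x + exp (l * (t - z)) * expSum β μ z) := by
  set M := ∑ k, |μ k - l|⁻¹
  have hM : ∀ k, |μ k - l|⁻¹ ≤ M := fun k =>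
    Finset.single_le_sum (f := fun k => |μ k - l|⁻¹) (fun _ _ => by positivity)
      (Finset.mem_univ k)
  have hterm : ∀ k, ∫ s in Ι x z, β k * (exp (l * (t - s)) * exp (μ k * s)) ≤
      M * (β k * (exp (l * (t - x)) * exp (μ k * x))
        + β k * (exp (l * (t - z)) * exp (μ k * z))) := by
    intro k
    rw [integral_const_mul, ← mul_add, mul_left_comm]
    gcongr
    · exact hβ k
    · refine (integral_exp_mul_exp_le l (μ k) t x z (hμ k)).trans ?_
      rw [div_eq_inv_mul]
      gcongr
      exact hM k
  simp only [expSum, Finset.mul_sum]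
  rw [integral_finsetSum _ fun k _ => (by fun_prop : Continuous _).integrableOn_uIoc]
  simp only [mul_left_comm (exp _) (β _)]
  calc _ ≤ ∑ k, _ := Finset.sum_le_sum fun k _ => hterm k
    _ = _ := by rw [← Finset.mul_sum, Finset.sum_add_distrib]

end expSum

theorem abs_le_exp_mul_abs_add_integral {g g' F : ℝ → ℝ} {l A B x z : ℝ}
    (hg : ∀ s ∈ Icc A B, HasDerivWithinAt g (g' s) (Icc A B) s)
    (hg' : ContinuousOn g' (Icc A B)) (hx : x ∈ Icc A B) (hz : z ∈ Icc A B)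
    (hgF : ∀ s ∈ Icc A B, |g' s - l * g s| ≤ F s)
    (hF : IntegrableOn (fun s => exp (l * (z - s)) * F s) (Ι x z)) :
    |g z| ≤ exp (l * (z - x)) * |g x| + ∫ s in Ι x z, exp (l * (z - s)) * F s := by
  have hsub : uIcc x z ⊆ Icc A B := uIcc_subset_Icc hx hz
  set v : ℝ → ℝ := fun s => exp (l * (z - s)) * g s
  set v' : ℝ → ℝ := fun s => exp (l * (z - s)) * (g' s - l * g s)
  have hv : ∀ s ∈ Icc A B, HasDerivWithinAt v (v' s) (Icc A B) s := by
    intro s hs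
    have := ((((hasDerivAt_id s).const_sub z).const_mul l).exp.hasDerivWithinAt).mul (hg s hs)
    refine this.congr_deriv ?_
    simp only [v', id]
    ring
  have hv' : ContinuousOn v' (Icc A B) :=
    (Continuous.continuousOn (by fun_prop)).mul
      (hg'.sub (continuousOn_const.mul fun s hs => (hg s hs).continuousWithinAt))
  have hftc : ∫ s in x..z, v' s = v z - v x := by
    refine intervalIntegral.integral_eq_sub_of_hasDeriv_right
      (fun s hs => (hv s (hsub hs)).continuousWithinAt.mono hsub) (fun s hs => ?_)
      ((hv'.mono hsub).intervalIntegrable)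
    have hs' : s ∈ Ioo A B :=
      ⟨(le_min hx.1 hz.1).trans_lt hs.1, hs.2.trans_le (max_le hx.2 hz.2)⟩
    exact ((hv s (Ioo_subset_Icc_self hs')).hasDerivAt (Icc_mem_nhds hs'.1 hs'.2)).hasDerivWithinAt
  have hvz : v z = g z := by simp [v]
  have hvx : |v x| = exp (l * (z - x)) * |g x| := by simp [v, abs_mul]
  calc |g z| ≤ |v x| + |v z - v x| := by
        have := abs_sub_abs_le_abs_sub (v z) (v x)
        rw [← hvz]; linarith
    _ ≤ exp (l * (z - x)) * |g x| + ∫ s in Ι x z, |v' s| := by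
        rw [hvx, ← hftc]
        gcongr
        simpa only [Real.norm_eq_abs] using
          intervalIntegral.norm_integral_le_integral_norm_uIoc (f := v') (μ := volume)
    _ ≤ _ := by
        refine add_le_add_right ?_ _
        refine integral_mono_of_nonneg (.of_forall fun _ => abs_nonneg _) hF ?_
        refine ae_restrict_of_forall_mem measurableSet_uIoc fun s hs => ?_
        simp only [v', abs_mul, abs_of_pos (exp_pos _)]
        gcongr
        exact hgF s (hsub (uIoc_subset_uIcc hs))

noncomputable def expTail (l a b : ℝ) (ψ : ℝ → ℝ) (t : ℝ) : ℝ :=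
  ∫ s in Ioc t b, exp (l * (t - s)) * (ψ s * exp (-(a * s)))

theorem expTail_nonneg {ψ : ℝ → ℝ} (hψ : ∀ s, 0 ≤ ψ s) (l a b t : ℝ) :
    0 ≤ expTail l a b ψ t :=
  setIntegral_nonneg measurableSet_Ioc fun s _ => mul_nonneg (exp_pos _).le
    (mul_nonneg (hψ s) (exp_pos _).le)

theorem integrableOn_exp_mul_mul_exp {ψ : ℝ → ℝ} {b : ℝ} (hψi : IntegrableOn ψ (Icc 0 b))
    (l a t : ℝ) :
    IntegrableOn (fun s => exp (l * (t - s)) * (ψ s * exp (-(a * s)))) (Icc 0 b) := by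
  have := hψi.continuousOn_mul (g := fun s => exp (l * (t - s)) * exp (-(a * s)))
    (Continuous.continuousOn (by fun_prop)) isCompact_Icc
  refine this.congr_fun (fun s _ => ?_) measurableSet_Icc
  ring

theorem setIntegral_exp_mul_le_expTail_add {ψ : ℝ → ℝ} {l a b s₀ t : ℝ} (hl : 0 ≤ l)
    (ha : 0 ≤ a) (hψ : ∀ s, 0 ≤ ψ s) (hψi : IntegrableOn ψ (Icc 0 b))
    (hs₀ : s₀ ∈ Icc 0 b) (ht : t ∈ Icc 0 b) :
    ∫ s in Ι s₀ t, exp (l * (t - s)) * (ψ s * exp (-(a * s))) ≤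
      expTail l a b ψ t + exp (l * (t - s₀)) * ∫ s in Icc 0 b, ψ s := by
  have hint := integrableOn_exp_mul_mul_exp hψi l a t
  have hnonneg : ∀ s, 0 ≤ exp (l * (t - s)) * (ψ s * exp (-(a * s))) := fun s =>
    mul_nonneg (exp_pos _).le (mul_nonneg (hψ s) (exp_pos _).le)
  rcases le_total t s₀ with hts | hst
  · have hI : 0 ≤ exp (l * (t - s₀)) * ∫ s in Icc 0 b, ψ s :=
      mul_nonneg (exp_pos _).le (setIntegral_nonneg measurableSet_Icc fun s _ => hψ s)
    rw [uIoc_of_ge hts]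
    refine le_add_of_le_of_nonneg (setIntegral_mono_set ?_ (.of_forall hnonneg) ?_) hI
    · exact hint.mono_set (Ioc_subset_Icc_self.trans (Icc_subset_Icc ht.1 le_rfl))
    · exact (Ioc_subset_Ioc_right hs₀.2).eventuallyLE
  · rw [uIoc_of_le hst]
    refine le_add_of_nonneg_of_le (expTail_nonneg hψ l a b t) ?_
    calc ∫ s in Ioc s₀ t, exp (l * (t - s)) * (ψ s * exp (-(a * s)))
        ≤ ∫ s in Ioc s₀ t, exp (l * (t - s₀)) * ψ s := by
          refine setIntegral_mono_on (hint.mono_set ?_) ((hψi.mono_set ?_).const_mul _)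
            measurableSet_Ioc fun s hs => ?_
          · exact Ioc_subset_Icc_self.trans (Icc_subset_Icc hs₀.1 ht.2)
          · exact Ioc_subset_Icc_self.trans (Icc_subset_Icc hs₀.1 ht.2)
          have h1 : exp (l * (t - s)) ≤ exp (l * (t - s₀)) := by
            gcongr; exact hs.1.le
          have h2 : exp (-(a * s)) ≤ 1 := exp_le_one_iff.2 <| neg_nonpos.2 <|
            mul_nonneg ha (hs₀.1.trans hs.1.le)
          calc _ ≤ exp (l * (t - s₀)) * (ψ s * 1) :=
                mul_le_mul h1 (mul_le_mul_of_nonneg_left h2 (hψ s))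
                  (mul_nonneg (hψ s) (exp_pos _).le) (exp_pos _).le
            _ = _ := by rw [mul_one]
      _ ≤ exp (l * (t - s₀)) * ∫ s in Icc 0 b, ψ s := by
          rw [integral_const_mul]
          refine mul_le_mul_of_nonneg_left ?_ (exp_pos _).le
          refine setIntegral_mono_set hψi (.of_forall hψ) ?_
          exact (Ioc_subset_Icc_self.trans (Icc_subset_Icc hs₀.1 ht.2)).eventuallyLE

noncomputable def tailKernel (l₁ l₂ a r t s : ℝ) : ℝ :=
  if t ≤ s then exp (l₂ * (r - t)) * (exp (l₁ * (t - s)) * exp (-(a * s))) else 0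

theorem exp_mul_expTail_eq_integral_tailKernel (l₁ l₂ a b r : ℝ) (ψ : ℝ → ℝ) {t : ℝ}
    (ht : 0 ≤ t) :
    exp (l₂ * (r - t)) * expTail l₁ a b ψ t = ∫ s in Icc 0 b, tailKernel l₁ l₂ a r t s * ψ s := by
  have hind : ∀ s ∈ Icc 0 b, tailKernel l₁ l₂ a r t s * ψ s = (Icc t b).indicator
      (fun s => exp (l₂ * (r - t)) * (exp (l₁ * (t - s)) * (ψ s * exp (-(a * s))))) s := by
    intro s hs
    by_cases hts : t ≤ s
    · rw [indicator_of_mem (mem_Icc.2 ⟨hts, hs.2⟩), tailKernel, if_pos hts]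
      ring
    · simp [tailKernel, hts]
  rw [setIntegral_congr_fun measurableSet_Icc hind, setIntegral_indicator measurableSet_Icc,
    inter_eq_right.2 (Icc_subset_Icc ht le_rfl), integral_Icc_eq_integral_Ioc,
    integral_const_mul, expTail]

theorem integrable_tailKernel_mul {ψ : ℝ → ℝ} {l₁ l₂ a b r : ℝ} (hl₂ : l₂ ≤ 0) (hl₁ : 0 ≤ l₁)
    (ha : 0 ≤ a) (hψ : ∀ s, 0 ≤ ψ s) (hψi : IntegrableOn ψ (Icc 0 b)) :
    Integrable (Function.uncurry fun t s => tailKernel l₁ l₂ a r t s * ψ s)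
      ((volume.restrict (Icc 0 r)).prod (volume.restrict (Icc 0 b))) := by
  have hk : ∀ t ∈ Icc 0 r, ∀ s, 0 ≤ tailKernel l₁ l₂ a r t s ∧ tailKernel l₁ l₂ a r t s ≤ 1 := by
    intro t ht s
    by_cases hts : t ≤ s
    · simp only [tailKernel, if_pos hts, ← exp_add]
      refine ⟨(exp_pos _).le, exp_le_one_iff.2 ?_⟩
      nlinarith [ht.1, ht.2]
    · simp [tailKernel, hts]
  refine Integrable.mono' ((integrable_const (1 : ℝ)).mul_prod hψi) ?_ ?_
  · refine AEStronglyMeasurable.mul (Measurable.aestronglyMeasurable ?_)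
      hψi.aestronglyMeasurable.comp_snd
    exact Measurable.ite (measurableSet_le measurable_fst measurable_snd) (by fun_prop)
      measurable_const
  · rw [Measure.prod_restrict]
    filter_upwards [ae_restrict_mem (measurableSet_Icc.prod measurableSet_Icc)] with p hp
    obtain ⟨h0, h1⟩ := hk p.1 hp.1 p.2
    rw [Function.uncurry_apply_pair, Real.norm_eq_abs, abs_of_nonneg (mul_nonneg h0 (hψ _))]
    exact mul_le_mul_of_nonneg_right h1 (hψ _)

theorem integral_tailKernel_le {l₁ l₂ a r s : ℝ} (hl : l₂ < l₁) (hl₁ : 0 ≤ l₁) (ha : 0 ≤ a)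
    (hr : 0 ≤ r) (hs : 0 ≤ s) :
    ∫ t in Icc 0 r, tailKernel l₁ l₂ a r t s ≤
      2 / (l₁ - l₂) * (exp (l₂ * r) + exp (-(a * r))) := by
  have hind : (fun t => tailKernel l₁ l₂ a r t s) = (Iic s).indicator
      (fun t => exp (l₂ * (r - t)) * (exp (l₁ * (t - s)) * exp (-(a * s)))) := by
    ext t; simp [tailKernel, indicator_apply]
  have hset : Icc 0 r ∩ Iic s = Icc 0 (min r s) := by ext; simp [and_assoc]
  rw [hind, setIntegral_indicator measurableSet_Iic, hset]
  exact integral_exp_mul_exp_mul_exp_le hl hl₁ ha (le_min hr hs) (min_le_left r s)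
    (min_le_right r s)

theorem integral_exp_mul_expTail_le {ψ : ℝ → ℝ} {l₁ l₂ a b r : ℝ} (hl₂ : l₂ ≤ 0) (hl₁ : 0 < l₁)
    (ha : 0 ≤ a) (hψ : ∀ s, 0 ≤ ψ s) (hψi : IntegrableOn ψ (Icc 0 b)) (hr : r ∈ Icc 0 b) :
    IntegrableOn (fun t => exp (l₂ * (r - t)) * expTail l₁ a b ψ t) (Ι 0 r) ∧
      ∫ t in Ι 0 r, exp (l₂ * (r - t)) * expTail l₁ a b ψ t ≤
        2 / (l₁ - l₂) * (exp (l₂ * r) + exp (-(a * r))) * ∫ s in Icc 0 b, ψ s := by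
  have hF := integrable_tailKernel_mul (r := r) hl₂ hl₁.le ha hψ hψi
  have hkernel : ∀ t ∈ Icc 0 r, exp (l₂ * (r - t)) * expTail l₁ a b ψ t =
      ∫ s in Icc 0 b, tailKernel l₁ l₂ a r t s * ψ s :=
    fun t ht => exp_mul_expTail_eq_integral_tailKernel l₁ l₂ a b r ψ ht.1
  rw [uIoc_of_le hr.1]
  constructor
  · exact (IntegrableOn.congr_fun hF.integral_prod_left (fun t ht => (hkernel t ht).symm)
      measurableSet_Icc).mono_set Ioc_subset_Icc_self
  · rw [← integral_Icc_eq_integral_Ioc, setIntegral_congr_fun measurableSet_Icc hkernel,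
      integral_integral_swap hF, ← integral_const_mul]
    refine setIntegral_mono_on hF.integral_prod_right (hψi.const_mul _) measurableSet_Icc
      fun s hs => ?_
    rw [integral_mul_const]
    exact mul_le_mul_of_nonneg_right
      (integral_tailKernel_le (by linarith) hl₁.le ha hr.1 hs.1) (hψ s)

theorem abs_le_of_abs_deriv_sub_mul_le_expSum_add {ι : Type*} [Fintype ι] {β μ : ι → ℝ}
    {ψ u u' : ℝ → ℝ} {l a K b s₀ t : ℝ} (hl : 0 ≤ l) (ha : 0 ≤ a) (hK : 0 ≤ K)
    (hβ : ∀ k, 0 ≤ β k) (hμ : ∀ k, μ k ≠ l) (hψ : ∀ s, 0 ≤ ψ s)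
    (hψi : IntegrableOn ψ (Icc 0 b))
    (hu : ∀ s ∈ Icc 0 b, HasDerivWithinAt u (u' s) (Icc 0 b) s) (hu' : ContinuousOn u' (Icc 0 b))
    (hode : ∀ s ∈ Icc 0 b, |u' s - l * u s| ≤ K * (expSum β μ s + ψ s * exp (-(a * s))))
    (hs₀ : s₀ ∈ Icc 0 b) (ht : t ∈ Icc 0 b) :
    |u t| ≤ exp (l * (t - s₀)) *
        (|u s₀| + K * ((∑ k, |μ k - l|⁻¹) * expSum β μ s₀ + ∫ s in Icc 0 b, ψ s)) +
      K * ((∑ k, |μ k - l|⁻¹) * expSum β μ t + expTail l a b ψ t) := by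
  have hW : IntegrableOn (fun s => exp (l * (t - s)) * expSum β μ s) (Ι s₀ t) :=
    (by fun_prop : Continuous _).integrableOn_uIoc
  have hP : IntegrableOn (fun s => exp (l * (t - s)) * (ψ s * exp (-(a * s)))) (Ι s₀ t) :=
    (integrableOn_exp_mul_mul_exp hψi l a t).mono_set
      (uIoc_subset_uIcc.trans (uIcc_subset_Icc hs₀ ht))
  have hsplit : ∀ s, exp (l * (t - s)) * (K * (expSum β μ s + ψ s * exp (-(a * s)))) =
      K * (exp (l * (t - s)) * expSum β μ s + exp (l * (t - s)) * (ψ s * exp (-(a * s)))) :=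
    fun s => by ring
  have hD := abs_le_exp_mul_abs_add_integral hu hu' hs₀ ht hode
    (by simp_rw [hsplit]; exact (hW.add hP).const_mul K)
  simp_rw [hsplit] at hD
  rw [integral_const_mul, integral_add hW hP] at hD
  have hWint := integral_exp_mul_expSum_le hβ hμ t s₀ t
  rw [sub_self, mul_zero, exp_zero, one_mul] at hWint
  have hPint := setIntegral_exp_mul_le_expTail_add hl ha hψ hψi hs₀ ht
  calc |u t| ≤ _ := hD
    _ ≤ exp (l * (t - s₀)) * |u s₀| + K * ((∑ k, |μ k - l|⁻¹) *
          (exp (l * (t - s₀)) * expSum β μ s₀ + expSum β μ t) +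
          (expTail l a b ψ t + exp (l * (t - s₀)) * ∫ s in Icc 0 b, ψ s)) := by
        gcongr
    _ = _ := by ring

theorem abs_le_of_abs_deriv_sub_mul_le_expSum_add_expTail {ι : Type*} [Fintype ι]
    {β μ : ι → ℝ} {ψ y y' : ℝ → ℝ} {l₁ l₂ a c A K M b r : ℝ} (hl₂ : l₂ ≤ 0) (hl₁ : 0 < l₁)
    (ha : 0 ≤ a) (hA : 0 ≤ A) (hK : 0 ≤ K) (hM : 0 ≤ M) (hβ : ∀ k, 0 ≤ β k)
    (hμ : ∀ k, μ k ≠ l₂) (hψ : ∀ s, 0 ≤ ψ s) (hψi : IntegrableOn ψ (Icc 0 b))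
    (hy : ∀ x ∈ Icc 0 b, HasDerivWithinAt y (y' x) (Icc 0 b) x) (hy' : ContinuousOn y' (Icc 0 b))
    (hu : ∀ x ∈ Icc 0 b, |y' x - l₂ * y x| ≤
      exp (l₁ * (x - c)) * A + K * (M * expSum β μ x + expTail l₁ a b ψ x))
    (hr : r ∈ Icc 0 b) :
    |y r| ≤ exp (l₂ * r) * |y 0| + 2 / (l₁ - l₂) * exp (l₁ * (r - c)) * A +
      K * (M * (∑ k, |μ k - l₂|⁻¹) * (exp (l₂ * r) * expSum β μ 0 + expSum β μ r) +
        2 / (l₁ - l₂) * (exp (l₂ * r) + exp (-(a * r))) * ∫ s in Icc 0 b, ψ s) := by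
  have hE : IntegrableOn (fun x => exp (l₂ * (r - x)) * exp (l₁ * (x - c))) (Ι 0 r) :=
    (by fun_prop : Continuous _).integrableOn_uIoc
  have hW : IntegrableOn (fun x => exp (l₂ * (r - x)) * expSum β μ x) (Ι 0 r) :=
    (by fun_prop : Continuous _).integrableOn_uIoc
  obtain ⟨hT, hTle⟩ := integral_exp_mul_expTail_le hl₂ hl₁ ha hψ hψi hr
  have hsplit : ∀ x, exp (l₂ * (r - x)) *
      (exp (l₁ * (x - c)) * A + K * (M * expSum β μ x + expTail l₁ a b ψ x)) =
      A * (exp (l₂ * (r - x)) * exp (l₁ * (x - c))) +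
        K * (M * (exp (l₂ * (r - x)) * expSum β μ x) +
          exp (l₂ * (r - x)) * expTail l₁ a b ψ x) := fun x => by ring
  have hWT : IntegrableOn (fun x => M * (exp (l₂ * (r - x)) * expSum β μ x) +
      exp (l₂ * (r - x)) * expTail l₁ a b ψ x) (Ι 0 r) := (hW.const_mul M).add hT
  have hEWT : IntegrableOn (fun x => A * (exp (l₂ * (r - x)) * exp (l₁ * (x - c))) +
      K * (M * (exp (l₂ * (r - x)) * expSum β μ x) +
        exp (l₂ * (r - x)) * expTail l₁ a b ψ x)) (Ι 0 r) :=
    (hE.const_mul A).add (hWT.const_mul K)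
  have hD := abs_le_exp_mul_abs_add_integral hy hy' (left_mem_Icc.2 (hr.1.trans hr.2)) hr hu
    (by simp_rw [hsplit]; exact hEWT)
  simp_rw [hsplit] at hD
  rw [integral_add (hE.const_mul A) (hWT.const_mul K), integral_const_mul, integral_const_mul,
    integral_add (hW.const_mul M) hT, integral_const_mul, sub_zero] at hD
  have hWint := integral_exp_mul_expSum_le hβ hμ r 0 r
  rw [sub_zero, sub_self, mul_zero, exp_zero, one_mul] at hWint
  have hEint := integral_exp_mul_exp_sub_le (show l₂ < l₁ by linarith) hr.1 c
  calc |y r| ≤ _ := hD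
    _ ≤ exp (l₂ * r) * |y 0| + (A * (2 / (l₁ - l₂) * exp (l₁ * (r - c))) +
        K * (M * ((∑ k, |μ k - l₂|⁻¹) * (exp (l₂ * r) * expSum β μ 0 + expSum β μ r)) +
          2 / (l₁ - l₂) * (exp (l₂ * r) + exp (-(a * r))) * ∫ s in Icc 0 b, ψ s)) := by
        gcongr
    _ = _ := by ring

theorem exists_mem_Ioo_abs_deriv_le {y y' : ℝ → ℝ} {S : Set ℝ} {p q c : ℝ} (hpq : p < q)
    (hS : Icc p q ⊆ S) (hy : ∀ x ∈ S, HasDerivWithinAt y (y' x) S x)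
    (hc : ∀ x ∈ S, |y x| ≤ c) :
    ∃ s ∈ Ioo p q, |y' s| ≤ 2 * c / (q - p) := by
  obtain ⟨s, hs, hslope⟩ := exists_hasDerivAt_eq_slope y y' hpq
    (fun x hx => (hy x (hS hx)).continuousWithinAt.mono hS)
    (fun x hx => (hy x (hS (Ioo_subset_Icc_self hx))).hasDerivAt
      (Filter.mem_of_superset (Icc_mem_nhds hx.1 hx.2) hS))
  refine ⟨s, hs, ?_⟩
  rw [hslope, abs_div, abs_of_pos (sub_pos.2 hpq)]
  gcongr
  linarith [abs_sub (y q) (y p), hc q (hS (right_mem_Icc.2 hpq.le)),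
    hc p (hS (left_mem_Icc.2 hpq.le))]

theorem abs_deriv_sub_mul_le_of_abs_le_one {ι : Type*} [Fintype ι] {β μ : ι → ℝ}
    {ψ y y' y'' : ℝ → ℝ} {l₁ l₂ a K R : ℝ} (hl₁ : 0 ≤ l₁) (ha : 0 ≤ a) (hK : 0 ≤ K) (hR : 2 ≤ R)
    (hβ : ∀ k, 0 ≤ β k) (hμ : ∀ k, μ k ≠ l₁) (hWK : ∀ r ∈ Icc (R - 2) (R - 1), expSum β μ r ≤ K)
    (hψ : ∀ s, 0 ≤ ψ s) (hψi : IntegrableOn ψ (Icc 0 (R - 1)))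
    (hψK : ∫ s in Icc 0 (R - 1), ψ s ≤ K)
    (hy : ∀ r ∈ Icc 0 (R - 1), HasDerivWithinAt y (y' r) (Icc 0 (R - 1)) r)
    (hy' : ∀ r ∈ Icc 0 (R - 1), HasDerivWithinAt y' (y'' r) (Icc 0 (R - 1)) r)
    (hy'' : ContinuousOn y'' (Icc 0 (R - 1))) (hy1 : ∀ r ∈ Icc 0 (R - 1), |y r| ≤ 1)
    (hode : ∀ r ∈ Icc 0 (R - 1), |y'' r - (l₁ + l₂) * y' r + l₁ * l₂ * y r| ≤
      K * (expSum β μ r + ψ r * exp (-(a * r))))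
    {t : ℝ} (ht : t ∈ Icc 0 (R - 1)) :
    |y' t - l₂ * y t| ≤
      exp (l₁ * (t - R)) * (exp (2 * l₁) * (2 + |l₂| + K * ((∑ k, |μ k - l₁|⁻¹) * K + K))) +
        K * ((∑ k, |μ k - l₁|⁻¹) * expSum β μ t + expTail l₁ a (R - 1) ψ t) := by
  set M := ∑ k, |μ k - l₁|⁻¹
  obtain ⟨s₀, hs₀, hys₀⟩ := exists_mem_Ioo_abs_deriv_le (by linarith : R - 2 < R - 1)
    (Icc_subset_Icc (by linarith) le_rfl) hy hy1
  rw [show R - 1 - (R - 2) = 1 by ring, div_one, mul_one] at hys₀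
  have hs₀' : s₀ ∈ Icc 0 (R - 1) := ⟨by linarith [hs₀.1], hs₀.2.le⟩
  have hM : 0 ≤ M := by positivity
  have hX : |y' s₀ - l₂ * y s₀| + K * (M * expSum β μ s₀ + ∫ s in Icc 0 (R - 1), ψ s) ≤
      2 + |l₂| + K * (M * K + K) := by
    have hys₀' : |l₂ * y s₀| ≤ |l₂| := by
      rw [abs_mul]; exact mul_le_of_le_one_right (abs_nonneg _) (hy1 s₀ hs₀')
    gcongr
    · linarith [abs_sub (y' s₀) (l₂ * y s₀)]
    · exact hWK s₀ (Ioo_subset_Icc_self hs₀)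
  have hexp : exp (l₁ * (t - s₀)) ≤ exp (l₁ * (t - R)) * exp (2 * l₁) := by
    rw [← exp_add]; gcongr; nlinarith [hs₀.1]
  have hu := abs_le_of_abs_deriv_sub_mul_le_expSum_add (u := fun x => y' x - l₂ * y x)
    hl₁ ha hK hβ hμ hψ hψi (fun x hx => (hy' x hx).sub ((hy x hx).const_mul l₂))
    (hy''.sub (continuousOn_const.mul fun x hx => (hy' x hx).continuousWithinAt))
    (fun x hx => by
      rw [show y'' x - l₂ * y' x - l₁ * (y' x - l₂ * y x) =
        y'' x - (l₁ + l₂) * y' x + l₁ * l₂ * y x by ring]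
      exact hode x hx) hs₀' ht
  refine hu.trans (add_le_add_left ?_ _)
  rw [← mul_assoc]
  refine mul_le_mul hexp hX (add_nonneg (abs_nonneg _) (mul_nonneg hK (add_nonneg
    (mul_nonneg hM (expSum_nonneg hβ μ s₀)) (setIntegral_nonneg measurableSet_Icc fun s _ => hψ s))))
    (by positivity)

/-- Growth estimate for the ODE `Q(d/dr) y = u` with `Q(X) = (X-λ₁)(X-λ₂)`,
`λ₂ ≤ 0 < λ₁`, on `[0, R-1]` (`R ≥ 2`): if `|y| ≤ 1` and
`|Q(d/dr) y (r)| ≤ K (𝒲(r) + ψ(r) e^{-a r})`, where `𝒲(r) = ∑ₖ βₖ e^{μₖ r}` with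
`μₖ ∉ {λ₁, λ₂}`, `𝒲 ≤ K` on `[R-2, R-1]` and `‖ψ‖_{L¹([0,R-1])} ≤ K`, then
`|y(r)| ≤ C (e^{λ₂ r}(|y(0)| + 𝒲(0) + ‖ψ‖_{L¹}) + e^{λ₁(r-R)} + 𝒲(r) + ‖ψ‖_{L¹} e^{-a r})`
for a constant `C` depending only on `λ₁, λ₂, a, K` and the `μₖ` — not on `R`, the `βₖ`,
`ψ` or `y`. -/
theorem stmt_6 {ι : Type} [Fintype ι] (l₁ l₂ a K : ℝ)
    (hl₂ : l₂ ≤ 0) (hl₁ : 0 < l₁) (ha : 0 ≤ a) (hK : 0 < K)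
    (μ : ι → ℝ) (hμ₁ : ∀ k, μ k ≠ l₁) (hμ₂ : ∀ k, μ k ≠ l₂) :
    ∃ C : ℝ, 0 < C ∧
      ∀ R : ℝ, 2 ≤ R →
      ∀ β : ι → ℝ, (∀ k, 0 ≤ β k) →
      (∀ r ∈ Icc (R - 2) (R - 1), (∑ k, β k * exp (μ k * r)) ≤ K) →
      ∀ ψ : ℝ → ℝ, (∀ r, 0 ≤ ψ r) →
        IntegrableOn ψ (Icc 0 (R - 1)) →
        (∫ s in Icc (0 : ℝ) (R - 1), ψ s) ≤ K →
      ∀ y y' y'' : ℝ → ℝ,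
        (∀ r ∈ Icc (0 : ℝ) (R - 1), HasDerivWithinAt y (y' r) (Icc 0 (R - 1)) r) →
        (∀ r ∈ Icc (0 : ℝ) (R - 1), HasDerivWithinAt y' (y'' r) (Icc 0 (R - 1)) r) →
        ContinuousOn y'' (Icc 0 (R - 1)) →
        (∀ r ∈ Icc (0 : ℝ) (R - 1), |y r| ≤ 1) →
        (∀ r ∈ Icc (0 : ℝ) (R - 1),
          |y'' r - (l₁ + l₂) * y' r + l₁ * l₂ * y r|
            ≤ K * ((∑ k, β k * exp (μ k * r)) + ψ r * exp (-(a * r)))) →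
        ∀ r ∈ Icc (0 : ℝ) (R - 1),
          |y r| ≤ C * (exp (l₂ * r) * (|y 0| + (∑ k, β k * exp (μ k * 0))
                + ∫ s in Icc (0 : ℝ) (R - 1), ψ s)
            + exp (l₁ * (r - R))
            + (∑ k, β k * exp (μ k * r))
            + (∫ s in Icc (0 : ℝ) (R - 1), ψ s) * exp (-(a * r))) := by
  have hl : 0 < l₁ - l₂ := by linarith
  refine ⟨1 + 2 / (l₁ - l₂) * (exp (2 * l₁) * (2 + |l₂| + K * ((∑ k, |μ k - l₁|⁻¹) * K + K))) +
    K * ((∑ k, |μ k - l₁|⁻¹) * ∑ k, |μ k - l₂|⁻¹) + K * (2 / (l₁ - l₂)), by positivity, ?_⟩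
  intro R hR β hβ hWK ψ hψ hψi hψK y y' y'' hy hy' hy'' hy1 hode r hr
  have hyr := abs_le_of_abs_deriv_sub_mul_le_expSum_add_expTail hl₂ hl₁ ha (by positivity) hK.le
    (by positivity) hβ hμ₂ hψ hψi hy (fun x hx => (hy' x hx).continuousWithinAt)
    (fun t ht => abs_deriv_sub_mul_le_of_abs_le_one hl₁.le ha hK.le hR hβ hμ₁ hWK hψ hψi hψK
      hy hy' hy'' hy1 hode ht) hr
  set c₀ := 2 / (l₁ - l₂) * (exp (2 * l₁) * (2 + |l₂| + K * ((∑ k, |μ k - l₁|⁻¹) * K + K)))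
  set c₁ := K * ((∑ k, |μ k - l₁|⁻¹) * ∑ k, |μ k - l₂|⁻¹)
  set c₂ := K * (2 / (l₁ - l₂))
  change |y r| ≤ _ * (exp (l₂ * r) * (|y 0| + expSum β μ 0 + _) + _ + expSum β μ r + _)
  have hI : 0 ≤ ∫ s in Icc 0 (R - 1), ψ s := setIntegral_nonneg measurableSet_Icc fun s _ => hψ s
  -- every coefficient in `hyr` is `1`, `c₀`, `c₁` or `c₂`, and every term is nonnegative
  nlinarith [mul_nonneg (exp_pos (l₂ * r)).le (abs_nonneg (y 0)), mul_nonneg (exp_pos (l₂ * r)).le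
    (expSum_nonneg hβ μ 0), mul_nonneg (exp_pos (l₂ * r)).le hI, exp_pos (l₁ * (r - R)),
    expSum_nonneg hβ μ r, mul_nonneg hI (exp_pos (-(a * r))).le,
    (by positivity : 0 ≤ c₀), (by positivity : 0 ≤ c₁), (by positivity : 0 ≤ c₂)]
end

section
/- Equip T² × ℝ with a hyperbolic cusp metric g = e^{−2r} g_Flat + dr². Let h be a C² symmetric (0,2)-tensor field depending only on r which solves (1/2)Δ_L h + 2h = 0 and satisfies |h|(r) ≤ C(e^{−λ r} + e^{λ r}) for some C > 0 and λ ∈ (0,1). Then h is a trivial Einstein variation, i.e. h = e^{−2r} u_{ij} dx^i dx^j with constants u_{ij} (i,j ∈ {1,2}) satisfying u₁₁ + u₂₂ = 0. If moreover |h|(r) ≤ C e^{−λ r} for all r ∈ ℝ or |h|(r) ≤ C e^{λ r} for all r ∈ ℝ, then h = 0. -/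
/-!
Since `h` depends only on `r` and the cusp has constant curvature `-1`, the equation
`½ Δ_L h + 2h = 0` is a linear system of ODEs with constant coefficients in the components
`H r i j` (index `2` is the `r`-direction). It decouples into scalar second-order equations for
`H₀₀ + H₁₁`, `H₀₀ - H₁₁`, `H₀₁`, `H₀₂`, `H₁₂` and `H₂₂`, each solved by two exponentials.
The norm `|h|` dominates each component with weight `e^{2r}` (torus–torus), `e^r` (mixed)
or `1`, so the bound `|h| ≤ C (e^{-λr} + e^{λr})` with `0 < λ < 1` kills every weighted mode
whose rate lies outside `[-λ, λ]`. The only survivor is the rate-`0` mode `e^{-2r} u` of the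
traceless torus block, a trivial Einstein variation; its norm `|u|` is constant, so a one-sided
exponential bound forces `u = 0`.
-/

noncomputable section

namespace CuspODE

/-- Partial derivative in the coordinate direction `i` of a quantity depending only on the
cusp coordinate `r` (the coordinate with index `2`). -/
def pdr (i : Fin 3) (f : ℝ → ℝ) (r : ℝ) : ℝ := if i = 2 then deriv f r else 0

/-- Components of the cusp metric `g = e^{-2r}(dx₁² + dx₂²) + dr²` in cusp coordinates. -/
def gmet (r : ℝ) (i j : Fin 3) : ℝ :=
  if i = j then (if i = 2 then 1 else Real.exp (-(2 * r))) else 0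

/-- Components of the inverse of the cusp metric. -/
def ginv (r : ℝ) (i j : Fin 3) : ℝ :=
  if i = j then (if i = 2 then 1 else Real.exp (2 * r)) else 0

/-- Christoffel symbols `Γ^k_{ij}` of the cusp metric. -/
def chr (r : ℝ) (k i j : Fin 3) : ℝ :=
  (1 / 2) * ∑ l, ginv r k l *
    (pdr i (fun s => gmet s j l) r + pdr j (fun s => gmet s i l) r -
      pdr l (fun s => gmet s i j) r)

/-- Component on `∂_l` of the curvature `R(∂_i, ∂_j)∂_k` of the cusp metric. -/
def curv (r : ℝ) (i j k l : Fin 3) : ℝ :=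
  pdr i (fun s => chr s l j k) r - pdr j (fun s => chr s l i k) r +
    ∑ m, (chr r l i m * chr r m j k - chr r l j m * chr r m i k)

/-- Component on `∂_l` of the Ricci endomorphism `Ric(∂_a) = ∑ᵢ R(∂_a, eᵢ)eᵢ`. -/
def ricEnd (r : ℝ) (a l : Fin 3) : ℝ := ∑ i, ∑ j, ginv r i j * curv r a i j l

/-- First covariant derivative `(∇h)_{ij;k}` of an `r`-dependent symmetric `(0,2)`-tensor. -/
def cov1 (H : ℝ → Fin 3 → Fin 3 → ℝ) (r : ℝ) (i j k : Fin 3) : ℝ :=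
  pdr k (fun s => H s i j) r - (∑ l, chr r l k i * H r l j) - ∑ l, chr r l k j * H r i l

/-- Second covariant derivative `(∇²h)_{ij;k;m}`. -/
def cov2 (H : ℝ → Fin 3 → Fin 3 → ℝ) (r : ℝ) (i j k m : Fin 3) : ℝ :=
  pdr m (fun s => cov1 H s i j k) r - (∑ l, chr r l m i * cov1 H r l j k) -
    (∑ l, chr r l m j * cov1 H r i l k) - ∑ l, chr r l m k * cov1 H r i j l

/-- Connection Laplacian `Δ h = ∇*∇ h = -tr_g ∇² h`. -/
def connLap (H : ℝ → Fin 3 → Fin 3 → ℝ) (r : ℝ) (i j : Fin 3) : ℝ :=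
  -(∑ k, ∑ m, ginv r k m * cov2 H r i j k m)

/-- Weitzenböck curvature operator
`Ric(h)(x,y) = h(Ric x, y) + h(x, Ric y) - 2 tr_g h(·, R(·,x)y)`. -/
def ricOp (H : ℝ → Fin 3 → Fin 3 → ℝ) (r : ℝ) (a b : Fin 3) : ℝ :=
  (∑ l, ricEnd r a l * H r l b) + (∑ l, ricEnd r b l * H r a l) -
    2 * ∑ c, ∑ d, ginv r c d * ∑ l, curv r d a b l * H r c l

/-- Lichnerowicz Laplacian `Δ_L h = ∇*∇ h + Ric(h)`. -/
def lichLap (H : ℝ → Fin 3 → Fin 3 → ℝ) (r : ℝ) (i j : Fin 3) : ℝ :=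
  connLap H r i j + ricOp H r i j

/-- Pointwise norm `|h|` of an `r`-dependent symmetric `(0,2)`-tensor with respect to the
cusp metric. -/
def tensorNorm (H : ℝ → Fin 3 → Fin 3 → ℝ) (r : ℝ) : ℝ :=
  Real.sqrt (∑ i, ∑ j, ∑ a, ∑ b, ginv r i a * ginv r j b * H r i j * H r a b)

end CuspODE

open Real Filter Topology Set

theorem hasDerivAt_exp_const_mul (c r : ℝ) :
    HasDerivAt (fun s => exp (c * s)) (c * exp (c * r)) r := by
  simpa [mul_comm] using ((hasDerivAt_id r).const_mul c).exp

theorem hasDerivAt_of_contDiff_two {f : ℝ → ℝ} (hf : ContDiff ℝ 2 f) (r : ℝ) :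
    HasDerivAt f (deriv f r) r :=
  (hf.differentiable (by norm_num) r).hasDerivAt

theorem hasDerivAt_deriv_of_contDiff_two {f : ℝ → ℝ} (hf : ContDiff ℝ 2 f) (r : ℝ) :
    HasDerivAt (deriv f) (deriv (deriv f) r) r := by
  have hd : Differentiable ℝ (deriv f) := by
    simpa using hf.differentiable_iteratedDeriv 1 (by norm_num)
  exact (hd r).hasDerivAt

theorem eq_mul_exp_of_hasDerivAt {u : ℝ → ℝ} {c : ℝ} (hu : ∀ r, HasDerivAt u (c * u r) r)
    (r : ℝ) : u r = u 0 * exp (c * r) := by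
  have hg : ∀ s, HasDerivAt (fun s => u s * exp (-c * s)) 0 s := fun s =>
    ((hu s).mul (hasDerivAt_exp_const_mul (-c) s)).congr_deriv (by ring)
  have hconst := is_const_of_deriv_eq_zero (fun s => (hg s).differentiableAt)
    (fun s => (hg s).deriv) r 0
  simp only [mul_zero, exp_zero, mul_one] at hconst
  rw [← hconst, mul_assoc, ← exp_add]
  simp

theorem exists_eq_exp_add_exp_of_hasDerivAt {f f' f'' : ℝ → ℝ} {μ ν : ℝ}
    (hμν : μ ≠ ν) (hf : ∀ r, HasDerivAt f (f' r) r) (hf' : ∀ r, HasDerivAt f' (f'' r) r)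
    (hode : ∀ r, f'' r = (μ + ν) * f' r - μ * ν * f r) :
    ∃ A B : ℝ, ∀ r, f r = A * exp (μ * r) + B * exp (ν * r) := by
  -- `f' - ν f` solves the first-order equation with rate `μ`, and then `f - A e^{μr}` the one
  -- with rate `ν`.
  have hu : ∀ r, HasDerivAt (fun s => f' s - ν * f s) (μ * (f' r - ν * f r)) r := fun r =>
    ((hf' r).sub ((hf r).const_mul ν)).congr_deriv (by rw [hode]; ring)
  set A := (f' 0 - ν * f 0) / (μ - ν)
  have hA : A * (μ - ν) = f' 0 - ν * f 0 := div_mul_cancel₀ _ (sub_ne_zero.mpr hμν)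
  have hg : ∀ r, HasDerivAt (fun s => f s - A * exp (μ * s)) (ν * (f r - A * exp (μ * r))) r :=
    fun r => ((hf r).sub ((hasDerivAt_exp_const_mul μ r).const_mul A)).congr_deriv
      (by linear_combination eq_mul_exp_of_hasDerivAt hu r - exp (μ * r) * hA)
  refine ⟨A, f 0 - A, fun r => ?_⟩
  have hgr := eq_mul_exp_of_hasDerivAt hg r
  simp only [mul_zero, exp_zero, mul_one] at hgr
  linarith

theorem tendsto_exp_mul_atTop_nhds_zero {c : ℝ} (hc : c < 0) :
    Tendsto (fun r => exp (c * r)) atTop (𝓝 0) :=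
  tendsto_exp_atBot.comp (tendsto_id.const_mul_atTop_of_neg hc)

theorem leading_coeff_eq_zero_of_abs_le {A B a b lam K : ℝ} (hba : b < a) (hlam₀ : 0 ≤ lam)
    (hlam : lam < a)
    (h : ∀ r, |A * exp (a * r) + B * exp (b * r)| ≤ K * (exp (-(lam * r)) + exp (lam * r))) :
    A = 0 := by
  have hA : Tendsto (fun r => A + B * exp ((b - a) * r)) atTop (𝓝 A) := by
    simpa using ((tendsto_exp_mul_atTop_nhds_zero (sub_neg.mpr hba)).const_mul B).const_add A
  have hbound :
      Tendsto (fun r => K * (exp ((-lam - a) * r) + exp ((lam - a) * r))) atTop (𝓝 0) := by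
    simpa using ((tendsto_exp_mul_atTop_nhds_zero (by linarith : -lam - a < 0)).add
      (tendsto_exp_mul_atTop_nhds_zero (sub_neg.mpr hlam))).const_mul K
  refine tendsto_nhds_unique hA (squeeze_zero_norm (fun r => ?_) hbound)
  have hscale : ∀ c, exp ((c - a) * r) = exp (c * r) * exp (-(a * r)) := fun c => by
    rw [← exp_add]; ring_nf
  have hinv : exp (a * r) * exp (-(a * r)) = 1 := by rw [← exp_add]; simp
  have hfactor : A + B * exp ((b - a) * r) =
      (A * exp (a * r) + B * exp (b * r)) * exp (-(a * r)) := by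
    rw [hscale]; linear_combination (-A) * hinv
  calc ‖A + B * exp ((b - a) * r)‖
      = |A * exp (a * r) + B * exp (b * r)| * exp (-(a * r)) := by
        rw [Real.norm_eq_abs, hfactor, abs_mul, abs_of_pos (exp_pos _)]
    _ ≤ K * (exp (-(lam * r)) + exp (lam * r)) * exp (-(a * r)) :=
        mul_le_mul_of_nonneg_right (h r) (exp_pos _).le
    _ = K * (exp ((-lam - a) * r) + exp ((lam - a) * r)) := by
        rw [hscale, hscale]; ring_nf

theorem trailing_coeff_eq_zero_of_abs_le {A B a b lam K : ℝ} (hba : b < a) (hlam₀ : 0 ≤ lam)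
    (hlam : b < -lam)
    (h : ∀ r, |A * exp (a * r) + B * exp (b * r)| ≤ K * (exp (-(lam * r)) + exp (lam * r))) :
    B = 0 := by
  refine leading_coeff_eq_zero_of_abs_le (A := B) (B := A) (a := -b) (b := -a) (K := K)
    (by linarith) hlam₀ (by linarith) fun r => ?_
  simpa [add_comm] using h (-r)

theorem exists_eq_mul_exp_of_ode_of_abs_le {f f' f'' : ℝ → ℝ} {μ ν s lam K : ℝ}
    (hf : ∀ r, HasDerivAt f (f' r) r) (hf' : ∀ r, HasDerivAt f' (f'' r) r)
    (hode : ∀ r, f'' r = (μ + ν) * f' r - μ * ν * f r) (hνμ : ν < μ) (hlam₀ : 0 ≤ lam)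
    (hμ : lam < μ + s)
    (hbound : ∀ r, |exp (s * r) * f r| ≤ K * (exp (-(lam * r)) + exp (lam * r))) :
    ∃ B, ∀ r, f r = B * exp (ν * r) := by
  obtain ⟨A, B, hAB⟩ := exists_eq_exp_add_exp_of_hasDerivAt hνμ.ne' hf hf' hode
  have hshift : ∀ r, exp (s * r) * f r = A * exp ((μ + s) * r) + B * exp ((ν + s) * r) :=
    fun r => by rw [hAB, add_mul μ, add_mul ν, exp_add, exp_add]; ring
  have hA : A = 0 := leading_coeff_eq_zero_of_abs_le (by linarith) hlam₀ hμ
    fun r => hshift r ▸ hbound r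
  exact ⟨B, fun r => by simp [hAB, hA]⟩

theorem eq_zero_of_ode_of_abs_le {f f' f'' : ℝ → ℝ} {μ ν s lam K : ℝ}
    (hf : ∀ r, HasDerivAt f (f' r) r) (hf' : ∀ r, HasDerivAt f' (f'' r) r)
    (hode : ∀ r, f'' r = (μ + ν) * f' r - μ * ν * f r) (hlam₀ : 0 ≤ lam)
    (hμ : lam < μ + s) (hν : ν + s < -lam)
    (hbound : ∀ r, |exp (s * r) * f r| ≤ K * (exp (-(lam * r)) + exp (lam * r))) (r : ℝ) :
    f r = 0 := by
  obtain ⟨B, hB⟩ :=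
    exists_eq_mul_exp_of_ode_of_abs_le hf hf' hode (by linarith) hlam₀ hμ hbound
  have hB0 : B = 0 := trailing_coeff_eq_zero_of_abs_le (A := 0) (a := μ + s) (K := K)
    (by linarith) hlam₀ hν
    fun r => by simpa [hB, mul_left_comm, ← exp_add, add_mul, add_comm] using hbound r
  simp [hB, hB0]

theorem nonpos_of_le_mul_exp_neg {x C lam : ℝ} (hlam : 0 < lam)
    (h : ∀ r, x ≤ C * exp (-(lam * r))) : x ≤ 0 := by
  refine ge_of_tendsto' (?_ : Tendsto _ atTop _) h
  simpa using (tendsto_exp_mul_atTop_nhds_zero (neg_neg_of_pos hlam)).const_mul C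

namespace CuspODE

theorem deriv_gmet (r : ℝ) (i j : Fin 3) :
    deriv (fun s => gmet s i j) r = if i = j ∧ i ≠ 2 then -2 * exp (-(2 * r)) else 0 := by
  by_cases hij : i = j
  · subst hij
    by_cases hi : i = 2
    · simp [gmet, hi]
    · simpa [gmet, hi, neg_mul] using (hasDerivAt_exp_const_mul (-2) r).deriv
  · simp [gmet, hij]

theorem chr_eq (r : ℝ) (k i j : Fin 3) :
    chr r k i j =
      if k = 2 ∧ i = j ∧ i ≠ 2 then exp (-(2 * r))
      else if (i = 2 ∧ j = k ∧ k ≠ 2) ∨ (j = 2 ∧ i = k ∧ k ≠ 2) then -1 else 0 := by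
  fin_cases k <;> fin_cases i <;> fin_cases j <;>
    simp [chr, ginv, pdr, deriv_gmet] <;> ring_nf <;> simp [← exp_add]

theorem deriv_chr (r : ℝ) (k i j : Fin 3) :
    deriv (fun s => chr s k i j) r =
      if k = 2 ∧ i = j ∧ i ≠ 2 then -2 * exp (-(2 * r)) else 0 := by
  simp only [chr_eq]
  split_ifs
  · simpa [neg_mul] using (hasDerivAt_exp_const_mul (-2) r).deriv
  all_goals simp

-- Constant curvature `-1`: `R(X, Y)Z = g(X, Z) Y - g(Y, Z) X`.
theorem curv_eq (r : ℝ) (i j k l : Fin 3) :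
    curv r i j k l = (if l = j then gmet r i k else 0) - (if l = i then gmet r j k else 0) := by
  fin_cases i <;> fin_cases j <;> fin_cases k <;> fin_cases l <;>
    simp [curv, pdr, deriv_chr, Fin.sum_univ_three] <;> simp [chr_eq, gmet] <;> ring_nf

theorem ricEnd_eq (r : ℝ) (a l : Fin 3) : ricEnd r a l = if a = l then -2 else 0 := by
  fin_cases a <;> fin_cases l <;>
    simp [ricEnd, curv_eq, ginv, gmet, Fin.sum_univ_three] <;> ring_nf <;> norm_num [← exp_add]

theorem ginv_of_ne {r : ℝ} {i j : Fin 3} (h : i ≠ j) : ginv r i j = 0 := if_neg h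

theorem ginv_self_pos (r : ℝ) (i : Fin 3) : 0 < ginv r i i := by
  simp only [ginv, if_true]; positivity

variable {H : ℝ → Fin 3 → Fin 3 → ℝ}

theorem cov1_eq (r : ℝ) (i j k : Fin 3) :
    cov1 H r i j k =
      (if k = 2 then deriv (fun s => H s i j) r else 0)
      - (if k = i ∧ k ≠ 2 then exp (-(2 * r)) * H r 2 j else 0)
      + (if k = 2 ∧ i ≠ 2 then H r i j else 0)
      + (if i = 2 ∧ k ≠ 2 then H r k j else 0)
      - (if k = j ∧ k ≠ 2 then exp (-(2 * r)) * H r i 2 else 0)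
      + (if k = 2 ∧ j ≠ 2 then H r i j else 0)
      + (if j = 2 ∧ k ≠ 2 then H r i k else 0) := by
  fin_cases i <;> fin_cases j <;> fin_cases k <;>
    simp [cov1, pdr, chr_eq, Fin.sum_univ_three]

def flatIndicator (i : Fin 3) : ℝ := if i = 2 then 0 else 1

theorem flatIndicator_two : flatIndicator 2 = 0 := if_pos rfl

theorem flatIndicator_of_ne {i : Fin 3} (hi : i ≠ 2) : flatIndicator i = 1 := if_neg hi

theorem deriv_cov1_two {i j : Fin 3} (hs : ContDiff ℝ 2 fun r => H r i j) (r : ℝ) :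
    deriv (fun s => cov1 H s i j 2) r = deriv (deriv fun s => H s i j) r +
      (flatIndicator i + flatIndicator j) * deriv (fun s => H s i j) r := by
  have hcov : (fun s => cov1 H s i j 2) = fun s =>
      deriv (fun t => H t i j) s + (flatIndicator i + flatIndicator j) * H s i j := by
    funext s
    rw [cov1_eq]
    by_cases hi : i = 2 <;> by_cases hj : j = 2 <;> simp [flatIndicator, hi, hj]
    ring
  rw [hcov]
  exact ((hasDerivAt_deriv_of_contDiff_two hs r).add
    ((hasDerivAt_of_contDiff_two hs r).const_mul _)).deriv

theorem lichLap_eq (hs : ∀ i j, ContDiff ℝ 2 fun r => H r i j)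
    (hsym : ∀ r i j, H r i j = H r j i) (r : ℝ) (i j : Fin 3) :
    lichLap H r i j = -deriv (deriv fun s => H s i j) r
      + 2 * (1 - flatIndicator i - flatIndicator j) * deriv (fun s => H s i j) r
      - 4 * flatIndicator i * flatIndicator j * H r i j
      + if i = j ∧ i ≠ 2 then 2 * (H r 0 0 + H r 1 1) else 0 := by
  fin_cases i <;> fin_cases j <;>
    simp [lichLap, connLap, ricOp, cov2, pdr, ginv, gmet, Fin.sum_univ_three,
      deriv_cov1_two (hs _ _), ricEnd_eq, curv_eq, flatIndicator] <;>
    simp [cov1_eq, chr_eq, exp_neg, hsym r 1 0, hsym r 2 0, hsym r 2 1] <;>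
    field_simp <;> ring

theorem tensorNorm_eq_sqrt (H : ℝ → Fin 3 → Fin 3 → ℝ) (r : ℝ) :
    tensorNorm H r = √(∑ i, ∑ j, ginv r i i * ginv r j j * H r i j ^ 2) := by
  refine congrArg sqrt (Finset.sum_congr rfl fun i _ => Finset.sum_congr rfl fun j _ => ?_)
  rw [Finset.sum_eq_single i (fun a _ ha => Finset.sum_eq_zero fun b _ => by
      rw [ginv_of_ne ha.symm]; ring) (by simp),
    Finset.sum_eq_single j (fun b _ hb => by rw [ginv_of_ne hb.symm]; ring) (by simp)]
  ring

theorem abs_mul_le_tensorNorm {r w : ℝ} {i j : Fin 3} (hw : w ^ 2 = ginv r i i * ginv r j j) :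
    |w * H r i j| ≤ tensorNorm H r := by
  rw [tensorNorm_eq_sqrt]
  refine abs_le_sqrt ?_
  have hterm : ∀ i j, 0 ≤ ginv r i i * ginv r j j * H r i j ^ 2 := fun i j =>
    mul_nonneg (mul_pos (ginv_self_pos r i) (ginv_self_pos r j)).le (sq_nonneg _)
  calc (w * H r i j) ^ 2 = ginv r i i * ginv r j j * H r i j ^ 2 := by rw [mul_pow, hw]
    _ ≤ ∑ j', ginv r i i * ginv r j' j' * H r i j' ^ 2 :=
        Finset.single_le_sum (fun j' _ => hterm i j') (Finset.mem_univ j)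
    _ ≤ ∑ i', ∑ j', ginv r i' i' * ginv r j' j' * H r i' j' ^ 2 :=
        Finset.single_le_sum (f := fun i' => ∑ j', ginv r i' i' * ginv r j' j' * H r i' j' ^ 2)
          (fun i' _ => Finset.sum_nonneg fun j' _ => hterm i' j') (Finset.mem_univ i)

theorem abs_exp_two_mul_le_tensorNorm {r : ℝ} {i j : Fin 3} (hi : i ≠ 2) (hj : j ≠ 2) :
    |exp (2 * r) * H r i j| ≤ tensorNorm H r :=
  abs_mul_le_tensorNorm (by simp [ginv, hi, hj, sq])

theorem eq_zero_of_tensorNorm_eq_zero {r : ℝ} (h : tensorNorm H r = 0) (i j : Fin 3) :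
    H r i j = 0 := by
  have hpos := mul_pos (ginv_self_pos r i) (ginv_self_pos r j)
  have hw := abs_mul_le_tensorNorm (H := H) (sq_sqrt hpos.le)
  rw [h, abs_nonpos_iff, mul_eq_zero] at hw
  exact hw.resolve_left (sqrt_pos.mpr hpos).ne'

def IsTrivialEinsteinVariation (H : ℝ → Fin 3 → Fin 3 → ℝ) (u : Fin 2 → Fin 2 → ℝ) :
    Prop :=
  u 0 0 + u 1 1 = 0 ∧
    (∀ (r : ℝ) (i j : Fin 2), H r i.castSucc j.castSucc = exp (-(2 * r)) * u i j) ∧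
    ∀ (r : ℝ) (i : Fin 3), H r i 2 = 0 ∧ H r 2 i = 0

theorem IsTrivialEinsteinVariation.tensorNorm_eq {u : Fin 2 → Fin 2 → ℝ}
    (hu : IsTrivialEinsteinVariation H u) (r : ℝ) :
    tensorNorm H r = √(∑ i, ∑ j, u i j ^ 2) := by
  obtain ⟨-, hflat, hmixed⟩ := hu
  obtain ⟨⟨h00, h01⟩, h10, h11⟩ := by
    simpa only [Fin.forall_fin_two, Fin.castSucc_zero, Fin.castSucc_one] using hflat r
  have hexp : exp (2 * r) * exp (-(2 * r)) = 1 := by rw [← exp_add]; simp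
  have hscale : ∀ x, exp (2 * r) * exp (2 * r) * (exp (-(2 * r)) * x) ^ 2 = x ^ 2 := fun x => by
    linear_combination x ^ 2 * (exp (2 * r) * exp (-(2 * r)) + 1) * hexp
  rw [tensorNorm_eq_sqrt]
  simp [Fin.sum_univ_three, ginv, h00, h01, h10, h11, (hmixed r _).1, (hmixed r _).2, hscale]

structure IsRadialSolution (H : ℝ → Fin 3 → Fin 3 → ℝ) : Prop where
  symm : ∀ r i j, H r i j = H r j i
  contDiff : ∀ i j, ContDiff ℝ 2 fun r => H r i j
  lichLap_eq : ∀ r i j, (1 / 2) * lichLap H r i j + 2 * H r i j = 0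

namespace IsRadialSolution

variable {C lam : ℝ}

theorem hasDerivAt (hH : IsRadialSolution H) (i j : Fin 3) (r : ℝ) :
    HasDerivAt (fun s => H s i j) (deriv (fun s => H s i j) r) r :=
  hasDerivAt_of_contDiff_two (hH.contDiff i j) r

theorem hasDerivAt_deriv (hH : IsRadialSolution H) (i j : Fin 3) (r : ℝ) :
    HasDerivAt (deriv fun s => H s i j) (deriv (deriv fun s => H s i j) r) r :=
  hasDerivAt_deriv_of_contDiff_two (hH.contDiff i j) r

theorem deriv_deriv_eq (hH : IsRadialSolution H) (r : ℝ) (i j : Fin 3) :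
    deriv (deriv fun s => H s i j) r =
      2 * (1 - flatIndicator i - flatIndicator j) * deriv (fun s => H s i j) r
        + 4 * (1 - flatIndicator i * flatIndicator j) * H r i j
        + if i = j ∧ i ≠ 2 then 2 * (H r 0 0 + H r 1 1) else 0 := by
  have h := hH.lichLap_eq r i j
  rw [CuspODE.lichLap_eq hH.contDiff hH.symm] at h
  linarith

theorem deriv_deriv_diag_eq (hH : IsRadialSolution H) (r : ℝ) {k : Fin 3} (hk : k ≠ 2) :
    deriv (deriv fun s => H s k k) r =
      -2 * deriv (fun s => H s k k) r + 2 * (H r 0 0 + H r 1 1) := by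
  have h := hH.deriv_deriv_eq r k k
  rw [flatIndicator_of_ne hk, if_pos ⟨rfl, hk⟩] at h
  linear_combination h

theorem trace_eq_zero (hH : IsRadialSolution H) (hlam : lam ∈ Ico 0 1)
    (hbound : ∀ r, tensorNorm H r ≤ C * (exp (-(lam * r)) + exp (lam * r))) (r : ℝ) :
    H r 0 0 + H r 1 1 = 0 := by
  have h5 : √5 ^ 2 = 5 := sq_sqrt (by norm_num)
  have h5' : 2 < √5 := by nlinarith [sqrt_nonneg 5]
  refine eq_zero_of_ode_of_abs_le (f := fun r => H r 0 0 + H r 1 1) (μ := -1 + √5)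
    (ν := -1 - √5) (s := 2) (K := 2 * C)
    (fun r => (hH.hasDerivAt 0 0 r).add (hH.hasDerivAt 1 1 r))
    (fun r => (hH.hasDerivAt_deriv 0 0 r).add (hH.hasDerivAt_deriv 1 1 r)) (fun r => ?_) hlam.1
    (by linarith [hlam.2]) (by linarith [hlam.2]) (fun r => ?_) r
  · linear_combination hH.deriv_deriv_diag_eq r (k := 0) (by decide) +
      hH.deriv_deriv_diag_eq r (k := 1) (by decide) - (H r 0 0 + H r 1 1) * h5
  · calc |exp (2 * r) * (H r 0 0 + H r 1 1)|
        ≤ |exp (2 * r) * H r 0 0| + |exp (2 * r) * H r 1 1| := by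
          rw [mul_add]; exact abs_add_le _ _
      _ ≤ tensorNorm H r + tensorNorm H r :=
          add_le_add (abs_exp_two_mul_le_tensorNorm (by decide) (by decide))
            (abs_exp_two_mul_le_tensorNorm (by decide) (by decide))
      _ ≤ 2 * C * (exp (-(lam * r)) + exp (lam * r)) := by linarith [hbound r]

theorem exists_diag_sub_eq (hH : IsRadialSolution H) (hlam : lam ∈ Ico 0 1)
    (hbound : ∀ r, tensorNorm H r ≤ C * (exp (-(lam * r)) + exp (lam * r))) :
    ∃ a, ∀ r, H r 0 0 - H r 1 1 = a * exp (-2 * r) := by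
  refine exists_eq_mul_exp_of_ode_of_abs_le (f := fun r => H r 0 0 - H r 1 1) (μ := 0) (s := 2)
    (K := 2 * C) (fun r => (hH.hasDerivAt 0 0 r).sub (hH.hasDerivAt 1 1 r))
    (fun r => (hH.hasDerivAt_deriv 0 0 r).sub (hH.hasDerivAt_deriv 1 1 r)) (fun r => ?_)
    (by norm_num) hlam.1 (by linarith [hlam.2]) (fun r => ?_)
  · linear_combination hH.deriv_deriv_diag_eq r (k := 0) (by decide) -
      hH.deriv_deriv_diag_eq r (k := 1) (by decide)
  · calc |exp (2 * r) * (H r 0 0 - H r 1 1)|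
        ≤ |exp (2 * r) * H r 0 0| + |exp (2 * r) * H r 1 1| := by
          rw [mul_sub]; exact abs_sub _ _
      _ ≤ tensorNorm H r + tensorNorm H r :=
          add_le_add (abs_exp_two_mul_le_tensorNorm (by decide) (by decide))
            (abs_exp_two_mul_le_tensorNorm (by decide) (by decide))
      _ ≤ 2 * C * (exp (-(lam * r)) + exp (lam * r)) := by linarith [hbound r]

theorem exists_offDiag_eq (hH : IsRadialSolution H) (hlam : lam ∈ Ico 0 1)
    (hbound : ∀ r, tensorNorm H r ≤ C * (exp (-(lam * r)) + exp (lam * r))) :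
    ∃ b, ∀ r, H r 0 1 = b * exp (-2 * r) := by
  refine exists_eq_mul_exp_of_ode_of_abs_le (μ := 0) (s := 2) (K := C) (hH.hasDerivAt 0 1)
    (hH.hasDerivAt_deriv 0 1) (fun r => ?_) (by norm_num) hlam.1 (by linarith [hlam.2])
    fun r => (abs_exp_two_mul_le_tensorNorm (by decide) (by decide)).trans (hbound r)
  have h := hH.deriv_deriv_eq r 0 1
  rw [flatIndicator_of_ne (by decide), flatIndicator_of_ne (by decide), if_neg (by decide)] at h
  linear_combination h

theorem mixed_eq_zero (hH : IsRadialSolution H) (hlam : lam ∈ Ico 0 1)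
    (hbound : ∀ r, tensorNorm H r ≤ C * (exp (-(lam * r)) + exp (lam * r))) (r : ℝ)
    {k : Fin 3} (hk : k ≠ 2) : H r k 2 = 0 := by
  have hw : ∀ t, exp (1 * t) ^ 2 = ginv t k k * ginv t 2 2 := fun t => by
    simp [ginv, hk, sq, ← exp_add, two_mul]
  refine eq_zero_of_ode_of_abs_le (μ := 2) (ν := -2) (s := 1) (K := C) (hH.hasDerivAt k 2)
    (hH.hasDerivAt_deriv k 2) (fun r => ?_) hlam.1 (by linarith [hlam.2]) (by linarith [hlam.2])
    (fun t => (abs_mul_le_tensorNorm (hw t)).trans (hbound t)) r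
  have h := hH.deriv_deriv_eq r k 2
  rw [flatIndicator_of_ne hk, flatIndicator_two, if_neg fun h => hk h.1] at h
  linear_combination h

theorem two_two_eq_zero (hH : IsRadialSolution H) (hlam : lam ∈ Ico 0 1)
    (hbound : ∀ r, tensorNorm H r ≤ C * (exp (-(lam * r)) + exp (lam * r))) (r : ℝ) :
    H r 2 2 = 0 := by
  have h5 : √5 ^ 2 = 5 := sq_sqrt (by norm_num)
  have h5' : 2 < √5 := by nlinarith [sqrt_nonneg 5]
  refine eq_zero_of_ode_of_abs_le (μ := 1 + √5) (ν := 1 - √5) (s := 0) (K := C)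
    (hH.hasDerivAt 2 2) (hH.hasDerivAt_deriv 2 2) (fun r => ?_) hlam.1 (by linarith [hlam.2])
    (by linarith [hlam.2]) (fun r => (abs_mul_le_tensorNorm (by simp [ginv])).trans (hbound r)) r
  have h := hH.deriv_deriv_eq r 2 2
  rw [flatIndicator_two, if_neg (by decide)] at h
  linear_combination h - H r 2 2 * h5

theorem exists_isTrivialEinsteinVariation (hH : IsRadialSolution H) (hlam : lam ∈ Ico 0 1)
    (hbound : ∀ r, tensorNorm H r ≤ C * (exp (-(lam * r)) + exp (lam * r))) :
    ∃ u, IsTrivialEinsteinVariation H u := by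
  obtain ⟨a, ha⟩ := hH.exists_diag_sub_eq hlam hbound
  obtain ⟨b, hb⟩ := hH.exists_offDiag_eq hlam hbound
  have hlast : ∀ r i, H r i 2 = 0 := fun r i => by
    by_cases hi : i = 2
    · exact hi ▸ hH.two_two_eq_zero hlam hbound r
    · exact hH.mixed_eq_zero hlam hbound r hi
  refine ⟨![![a / 2, b], ![b, -(a / 2)]], by simp, fun r i j => ?_,
    fun r i => ⟨hlast r i, hH.symm r 2 i ▸ hlast r i⟩⟩
  have hdiff := ha r
  have hoff := hb r
  rw [neg_mul] at hdiff hoff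
  fin_cases i <;> fin_cases j <;> simp <;>
    linarith [hH.trace_eq_zero hlam hbound r, hH.symm r 1 0]

end IsRadialSolution

end CuspODE

open CuspODE

theorem stmt_12_general (C lam : ℝ) (hlam : lam ∈ Set.Ioo (0 : ℝ) 1)
    (H : ℝ → Fin 3 → Fin 3 → ℝ)
    (hHsymm : ∀ r i j, H r i j = H r j i)
    (hHsmooth : ∀ i j, ContDiff ℝ 2 fun r => H r i j)
    (heq : ∀ (r : ℝ) (i j : Fin 3), (1 / 2) * lichLap H r i j + 2 * H r i j = 0)
    (hbound : ∀ r : ℝ, tensorNorm H r ≤ C * (Real.exp (-(lam * r)) + Real.exp (lam * r))) :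
    (∃ u : Fin 2 → Fin 2 → ℝ, u 0 0 + u 1 1 = 0 ∧
      (∀ (r : ℝ) (i j : Fin 2), H r i.castSucc j.castSucc = Real.exp (-(2 * r)) * u i j) ∧
      (∀ (r : ℝ) (i : Fin 3), H r i 2 = 0 ∧ H r 2 i = 0)) ∧
    ((∀ r : ℝ, tensorNorm H r ≤ C * Real.exp (-(lam * r))) → ∀ r i j, H r i j = 0) ∧
    ((∀ r : ℝ, tensorNorm H r ≤ C * Real.exp (lam * r)) → ∀ r i j, H r i j = 0) := by
  have hH : IsRadialSolution H := ⟨hHsymm, hHsmooth, heq⟩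
  obtain ⟨u, hu⟩ := hH.exists_isTrivialEinsteinVariation (Ioo_subset_Ico_self hlam) hbound
  have hvanish :
      (∀ r, √(∑ i, ∑ j, u i j ^ 2) ≤ C * exp (-(lam * r))) → ∀ r i j, H r i j = 0 :=
    fun h r => eq_zero_of_tensorNorm_eq_zero <| (hu.tensorNorm_eq r).trans <|
      le_antisymm (nonpos_of_le_mul_exp_neg hlam.1 h) (sqrt_nonneg _)
  refine ⟨⟨u, hu⟩, fun hdecay => hvanish fun r => ?_, fun hgrow => hvanish fun r => ?_⟩
  · exact hu.tensorNorm_eq r ▸ hdecay r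
  · simpa [hu.tensorNorm_eq] using hgrow (-r)

/-- On the two-sided infinite hyperbolic cusp `T² × ℝ` with metric
`g = e^{-2r} g_Flat + dr²`, a `C²` symmetric `(0,2)`-tensor field `h` depending only on `r`
(components `H` in cusp coordinates) which solves `(1/2) Δ_L h + 2h = 0` and satisfies
`|h|(r) ≤ C (e^{-λr} + e^{λr})` for some `λ ∈ (0,1)` is a trivial Einstein variation, i.e.
`h = e^{-2r} u_{ij} dx^i dx^j` with constants `u_{ij}` satisfying `u₁₁ + u₂₂ = 0`; moreover,
if `|h|(r) ≤ C e^{-λr}` for all `r`, or `|h|(r) ≤ C e^{λr}` for all `r`, then `h = 0`. -/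
theorem stmt_12 (C lam : ℝ) (hC : 0 < C) (hlam : lam ∈ Set.Ioo (0 : ℝ) 1)
    (H : ℝ → Fin 3 → Fin 3 → ℝ)
    (hHsymm : ∀ r i j, H r i j = H r j i)
    (hHsmooth : ∀ i j, ContDiff ℝ 2 fun r => H r i j)
    (heq : ∀ (r : ℝ) (i j : Fin 3), (1 / 2) * lichLap H r i j + 2 * H r i j = 0)
    (hbound : ∀ r : ℝ, tensorNorm H r ≤ C * (Real.exp (-(lam * r)) + Real.exp (lam * r))) :
    (∃ u : Fin 2 → Fin 2 → ℝ, u 0 0 + u 1 1 = 0 ∧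
      (∀ (r : ℝ) (i j : Fin 2), H r i.castSucc j.castSucc = Real.exp (-(2 * r)) * u i j) ∧
      (∀ (r : ℝ) (i : Fin 3), H r i 2 = 0 ∧ H r 2 i = 0)) ∧
    ((∀ r : ℝ, tensorNorm H r ≤ C * Real.exp (-(lam * r))) → ∀ r i j, H r i j = 0) ∧
    ((∀ r : ℝ, tensorNorm H r ≤ C * Real.exp (lam * r)) → ∀ r i j, H r i j = 0) :=
  stmt_12_general C lam hlam H hHsymm hHsmooth heq hbound
end
end
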